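/- arXiv:2507.15534 — 5 statements merged into one kernel-verified Lean document; each statement's English description precedes it below -/
import Mathlib

section
/- Let q ∈ (0,1) and let S ⊆ M₂(ℂ) be a one-dimensional ℂ-linear subspace. Then exactly one of the following holds: (i) S = ℂ·I₂; (ii) there exists a unique α ∈ ℂ such that π(S) = ℂ·diag(α + q⁻², α − 1) for some *-automorphism π of M₂(ℂ) with ψ_q∘π = ψ_q; (iii) there exists a unique triple (α, β, γ) ∈ J^(1C) such that π(S) = ℂ·T, where T ∈ M₂(ℂ) has rows (α + q⁻²γ, 1+β), (1−β, α − γ), for some *-automorphism π of M₂(ℂ) with ψ_q∘π = ψ_q. -/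
open Matrix

/-- The index set `J^(1C)`. -/
def J1C (p : ℂ × ℝ × ℂ) : Prop :=
  p.2.1 ∈ Set.Icc (-1 : ℝ) 1 ∧
  ((p.2.1 = 1 ∨ p.2.1 = -1) → p.1 ≠ 0 → p.1.im = 0 ∧ 0 < p.1.re) ∧
  ((p.2.1 = 1 ∨ p.2.1 = -1) → p.1 = 0 → p.2.2.im = 0 ∧ 0 ≤ p.2.2.re) ∧
  ((-1 < p.2.1 ∧ p.2.1 < 1) → p.1 ≠ 0 → p.1.arg ∈ Set.Ico 0 Real.pi) ∧
  ((-1 < p.2.1 ∧ p.2.1 < 1) → p.1 = 0 → p.2.2.arg ∈ Set.Ico 0 Real.pi)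

/-- The density matrix `ρ_q = (1+q²)·diag(q⁻², 1)`. -/
noncomputable def rhoq (q : ℝ) : Matrix (Fin 2) (Fin 2) ℂ :=
  (1 + (q : ℂ) ^ 2) • !![((q : ℂ) ^ 2)⁻¹, 0; 0, 1]

/-- A *-automorphism of `M₂(ℂ)` preserving `ψ_q = Tr(ρ_q ·)`. -/
def PreservesPsiq (q : ℝ) (π : Matrix (Fin 2) (Fin 2) ℂ ≃ₐ[ℂ] Matrix (Fin 2) (Fin 2) ℂ) :
    Prop :=
  (∀ x, π xᴴ = (π x)ᴴ) ∧ (∀ x, Matrix.trace (rhoq q * π x) = Matrix.trace (rhoq q * x))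

------------------------------------------------------------------------
-- Auxiliary material
------------------------------------------------------------------------

abbrev M2 := Matrix (Fin 2) (Fin 2) ℂ

namespace Complex

noncomputable def abs : AbsoluteValue ℂ ℝ := IsAbsoluteValue.toAbsoluteValue (norm : ℂ → ℝ)

lemma abs_apply (z : ℂ) : abs z = Real.sqrt (normSq z) := Complex.norm_def z

@[simp] lemma abs_ofReal (r : ℝ) : abs (r : ℂ) = |r| := Complex.norm_real r

@[simp] lemma abs_two : abs 2 = 2 := by
  show ‖(2 : ℂ)‖ = 2
  simp

lemma sq_abs (z : ℂ) : abs z ^ 2 = normSq z := Complex.sq_norm z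

end Complex

lemma gen_of_finrank_one (S : Submodule ℂ M2) (hS : Module.finrank ℂ S = 1) :
    ∃ x : M2, x ≠ 0 ∧ S = Submodule.span ℂ {x} := by
  obtain ⟨v, hv0, hv⟩ := finrank_eq_one_iff'.mp hS
  refine ⟨(v : M2), by simpa using hv0, le_antisymm ?_ ?_⟩
  · intro s hs
    obtain ⟨c, hc⟩ := hv ⟨s, hs⟩
    have : c • (v : M2) = s := congrArg Subtype.val hc
    exact this ▸ Submodule.smul_mem _ c (Submodule.mem_span_singleton_self _)
  · rw [Submodule.span_singleton_le_iff_mem]; exact v.2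

lemma decomp (x : M2) : x = x 0 0 • !![1,0;0,0] + x 0 1 • !![0,1;0,0]
    + x 1 0 • !![0,0;1,0] + x 1 1 • !![0,0;0,1] := by
  ext i j; fin_cases i <;> fin_cases j <;> simp

lemma trace_pi (π : M2 ≃ₐ[ℂ] M2) (x : M2) : Matrix.trace (π x) = Matrix.trace x := by
  have h01 : Matrix.trace (π !![0,1;0,0]) = 0 := by
    have : (!![0,1;0,0] : M2) = !![1,0;0,0] * !![0,1;0,0] - !![0,1;0,0] * !![1,0;0,0] := by
      ext i j; fin_cases i <;> fin_cases j <;> simp [Matrix.mul_apply, Fin.sum_univ_two]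
    rw [this, map_sub, _root_.map_mul, _root_.map_mul, Matrix.trace_sub, Matrix.trace_mul_comm, sub_self]
  have h10 : Matrix.trace (π !![0,0;1,0]) = 0 := by
    have : (!![0,0;1,0] : M2) = !![0,0;1,0] * !![1,0;0,0] - !![1,0;0,0] * !![0,0;1,0] := by
      ext i j; fin_cases i <;> fin_cases j <;> simp [Matrix.mul_apply, Fin.sum_univ_two]
    rw [this, map_sub, _root_.map_mul, _root_.map_mul, Matrix.trace_sub, Matrix.trace_mul_comm, sub_self]
  have hsum : Matrix.trace (π !![1,0;0,0]) + Matrix.trace (π !![0,0;0,1]) = 2 := by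
    rw [← Matrix.trace_add, ← map_add]
    have : (!![1,0;0,0] + !![0,0;0,1] : M2) = 1 := by
      ext i j; fin_cases i <;> fin_cases j <;> simp
    rw [this, _root_.map_one]
    simp [Matrix.trace_fin_two]
  have hdiff : Matrix.trace (π !![1,0;0,0]) - Matrix.trace (π !![0,0;0,1]) = 0 := by
    have : (!![1,0;0,0] - !![0,0;0,1] : M2) = !![0,1;0,0] * !![0,0;1,0] - !![0,0;1,0] * !![0,1;0,0] := by
      ext i j; fin_cases i <;> fin_cases j <;> simp [Matrix.mul_apply, Fin.sum_univ_two]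
    rw [← Matrix.trace_sub, ← map_sub, this, map_sub, _root_.map_mul, _root_.map_mul, Matrix.trace_sub,
      Matrix.trace_mul_comm, sub_self]
  have h00 : Matrix.trace (π !![1,0;0,0]) = 1 := by linear_combination (hsum + hdiff) / 2
  have h11 : Matrix.trace (π !![0,0;0,1]) = 1 := by linear_combination (hsum - hdiff) / 2
  conv_lhs => rw [decomp x]
  simp only [map_add, _root_.map_smul, Matrix.trace_add, Matrix.trace_smul]
  rw [h00, h01, h10, h11]
  simp [Matrix.trace_fin_two]

lemma psi_formula (q : ℝ) (y : M2) :
    Matrix.trace (rhoq q * y) = (1 + (q : ℂ) ^ 2) * (((q : ℂ) ^ 2)⁻¹ * y 0 0 + y 1 1) := by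
  simp [rhoq, Matrix.trace_fin_two, Matrix.mul_apply, Fin.sum_univ_two, Matrix.smul_mul,
    Matrix.vecMul, dotProduct, Fin.sum_univ_two]
  ring

section inv
variable {q : ℝ} (hq : q ∈ Set.Ioo (0:ℝ) 1)
include hq

lemma hq2ne : ((q:ℂ)^2) ≠ 0 := by
  have h := hq.1
  have hqne : (q:ℂ) ≠ 0 := by
    simp only [ne_eq, Complex.ofReal_eq_zero]; linarith
  exact pow_ne_zero 2 hqne

lemma h1q2ne : (1 + (q:ℂ)^2) ≠ 0 := by
  have h := hq.1
  have : ((1 + q^2 : ℝ) : ℂ) = 1 + (q:ℂ)^2 := by push_cast; ring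
  rw [← this]
  simp only [ne_eq, Complex.ofReal_eq_zero]
  nlinarith

lemma hpne1 : (((q:ℂ)^2)⁻¹ : ℂ) ≠ 1 := by
  rw [ne_eq, inv_eq_one]
  have : ((q^2 : ℝ) : ℂ) = (q:ℂ)^2 := by push_cast; ring
  rw [← this]
  simp only [ne_eq, Complex.ofReal_eq_one]
  nlinarith [hq.1, hq.2]

lemma hp1ne : (((q:ℂ)^2)⁻¹ + 1 : ℂ) ≠ 0 := by
  have h2 : ((q^2 : ℝ) : ℂ) = (q:ℂ)^2 := by push_cast; ring
  have : (((q^2)⁻¹ + 1 : ℝ) : ℂ) = ((q:ℂ)^2)⁻¹ + 1 := by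
    rw [Complex.ofReal_add, Complex.ofReal_inv, h2, Complex.ofReal_one]
  rw [← this, ne_eq, Complex.ofReal_eq_zero]
  have h1 : (0:ℝ) < q^2 := by nlinarith [hq.1]
  positivity

end inv

section entries
variable {q : ℝ} (hq : q ∈ Set.Ioo (0:ℝ) 1) {π : M2 ≃ₐ[ℂ] M2} (hπ : PreservesPsiq q π)
include hq hπ

lemma entry00 (x : M2) : π x 0 0 = x 0 0 := by
  have h1 := hπ.2 x
  rw [psi_formula, psi_formula] at h1
  have h1' : ((q:ℂ)^2)⁻¹ * π x 0 0 + π x 1 1 = ((q:ℂ)^2)⁻¹ * x 0 0 + x 1 1 :=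
    mul_left_cancel₀ (h1q2ne hq) h1
  have h2 : π x 0 0 + π x 1 1 = x 0 0 + x 1 1 := by
    have := trace_pi π x; rw [Matrix.trace_fin_two, Matrix.trace_fin_two] at this; exact this
  have h3 : (((q:ℂ)^2)⁻¹ - 1) * (π x 0 0 - x 0 0) = 0 := by linear_combination h1' - h2
  rcases mul_eq_zero.mp h3 with h | h
  · exact absurd (by linear_combination h) (hpne1 hq)
  · linear_combination h

lemma entry11 (x : M2) : π x 1 1 = x 1 1 := by
  have h2 : π x 0 0 + π x 1 1 = x 0 0 + x 1 1 := by
    have := trace_pi π x; rw [Matrix.trace_fin_two, Matrix.trace_fin_two] at this; exact this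
  have := entry00 hq hπ x
  linear_combination h2 - this

lemma offprod (x : M2) : π x 0 1 * π x 1 0 = x 0 1 * x 1 0 := by
  have h := entry00 hq hπ (x * x)
  rw [_root_.map_mul] at h
  simp only [Matrix.mul_apply, Fin.sum_univ_two] at h
  have h0 := entry00 hq hπ x
  rw [h0] at h
  linear_combination h

lemma offabs01 (x : M2) : Complex.abs (π x 0 1) = Complex.abs (x 0 1) := by
  have h := entry00 hq hπ (x * xᴴ)
  rw [_root_.map_mul, hπ.1] at h
  simp only [Matrix.mul_apply, Fin.sum_univ_two, Matrix.conjTranspose_apply] at h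
  have h0 := entry00 hq hπ x
  rw [h0] at h
  have key : π x 0 1 * star (π x 0 1) = x 0 1 * star (x 0 1) := by
    linear_combination h
  have hz : ∀ z : ℂ, z * star z = (Complex.normSq z : ℂ) := fun z => by
    rw [← Complex.mul_conj]; rfl
  rw [hz, hz, Complex.ofReal_inj] at key
  rw [Complex.abs_apply, Complex.abs_apply, key]

lemma offabs10 (x : M2) : Complex.abs (π x 1 0) = Complex.abs (x 1 0) := by
  have h := entry11 hq hπ (x * xᴴ)
  rw [_root_.map_mul, hπ.1] at h
  simp only [Matrix.mul_apply, Fin.sum_univ_two, Matrix.conjTranspose_apply] at h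
  have h1 := entry11 hq hπ x
  rw [h1] at h
  have key : π x 1 0 * star (π x 1 0) = x 1 0 * star (x 1 0) := by
    linear_combination h
  have hz : ∀ z : ℂ, z * star z = (Complex.normSq z : ℂ) := fun z => by
    rw [← Complex.mul_conj]; rfl
  rw [hz, hz, Complex.ofReal_inj] at key
  rw [Complex.abs_apply, Complex.abs_apply, key]

end entries
noncomputable def phiFun (l : ℂ) (x : M2) : M2 := !![x 0 0, l * x 0 1; l⁻¹ * x 1 0, x 1 1]

noncomputable def phi (l : ℂ) (hl : l ≠ 0) : M2 ≃ₐ[ℂ] M2 where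
  toFun := phiFun l
  invFun := phiFun l⁻¹
  left_inv x := by
    ext i j; fin_cases i <;> fin_cases j <;>
      simp [phiFun] <;> field_simp
  right_inv x := by
    ext i j; fin_cases i <;> fin_cases j <;>
      simp [phiFun] <;> field_simp
  map_mul' x y := by
    ext i j; fin_cases i <;> fin_cases j <;>
      simp [phiFun, Matrix.mul_apply, Fin.sum_univ_two] <;> (try field_simp) <;> (try ring)
  map_add' x y := by
    ext i j; fin_cases i <;> fin_cases j <;> simp [phiFun] <;> ring
  commutes' c := by
    ext i j
    have : (algebraMap ℂ M2) c = c • 1 := by simp [Algebra.algebraMap_eq_smul_one]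
    fin_cases i <;> fin_cases j <;> simp [phiFun, this, Matrix.one_apply]

lemma phi_apply (l : ℂ) (hl : l ≠ 0) (x : M2) :
    phi l hl x = !![x 0 0, l * x 0 1; l⁻¹ * x 1 0, x 1 1] := rfl

lemma cabs_ne_zero {l : ℂ} (hl : Complex.abs l = 1) : l ≠ 0 := by
  intro h; rw [h] at hl; simp at hl

lemma phi_preserves (q : ℝ) {l : ℂ} (hl : Complex.abs l = 1) :
    PreservesPsiq q (phi l (cabs_ne_zero hl)) := by
  have hl0 : l ≠ 0 := cabs_ne_zero hl
  have hcl : star l = l⁻¹ := by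
    have h1 : l * star l = (1:ℂ) := by
      rw [(by rfl : star l = (starRingEnd ℂ) l), Complex.mul_conj, ← Complex.sq_abs, hl]
      norm_num
    field_simp at h1 ⊢
    linear_combination h1
  constructor
  · intro x
    ext i j
    fin_cases i <;> fin_cases j <;>
      simp [phi_apply, Matrix.conjTranspose_apply, star_mul', hcl, map_inv₀]
  · intro x
    rw [psi_formula, psi_formula]
    simp [phi_apply]

lemma refl_preserves (q : ℝ) : PreservesPsiq q (AlgEquiv.refl : M2 ≃ₐ[ℂ] M2) :=
  ⟨fun _ => rfl, fun _ => rfl⟩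

lemma map_span_gen (π : M2 ≃ₐ[ℂ] M2) (x : M2) :
    Submodule.map π.toLinearMap (Submodule.span ℂ {x}) = Submodule.span ℂ {π x} := by
  rw [Submodule.map_span, Set.image_singleton]; rfl

lemma exists_smul_of_span_eq {u v : M2} (hu : u ≠ 0)
    (h : Submodule.span ℂ ({u} : Set M2) = Submodule.span ℂ ({v} : Set M2)) :
    ∃ s : ℂ, s ≠ 0 ∧ u = s • v := by
  have humem : u ∈ Submodule.span ℂ ({v} : Set M2) := by
    rw [← h]; exact Submodule.mem_span_singleton_self u
  obtain ⟨s, hs⟩ := Submodule.mem_span_singleton.mp humem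
  refine ⟨s, ?_, hs.symm⟩
  rintro rfl
  rw [zero_smul] at hs
  exact hu hs.symm

lemma span_smul_eq {s : ℂ} (hs : s ≠ 0) (v : M2) :
    Submodule.span ℂ ({s • v} : Set M2) = Submodule.span ℂ ({v} : Set M2) :=
  Submodule.span_singleton_smul_eq (IsUnit.mk0 s hs) v

lemma arg_exclusive {z : ℂ} (hz : z ≠ 0)
    (h1 : Complex.arg z ∈ Set.Ico 0 Real.pi)
    (h2 : Complex.arg (-z) ∈ Set.Ico 0 Real.pi) : False := by
  have i1 : 0 ≤ z.im := Complex.arg_nonneg_iff.mp h1.1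
  have i2 : 0 ≤ (-z).im := Complex.arg_nonneg_iff.mp h2.1
  have him : z.im = 0 := by simp at i2; linarith
  rcases lt_trichotomy z.re 0 with h | h | h
  · have : Complex.arg z = Real.pi := Complex.arg_eq_pi_iff.mpr ⟨h, him⟩
    exact absurd this (ne_of_lt h1.2)
  · exact hz (Complex.ext h him)
  · have : Complex.arg (-z) = Real.pi :=
      Complex.arg_eq_pi_iff.mpr ⟨by simpa using h, by simpa using him⟩
    exact absurd this (ne_of_lt h2.2)

lemma arg_choice {z : ℂ} (hz : z ≠ 0) :
    Complex.arg z ∈ Set.Ico 0 Real.pi ∨ Complex.arg (-z) ∈ Set.Ico 0 Real.pi := by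
  rcases lt_trichotomy z.im 0 with h | h | h
  · right
    constructor
    · rw [Complex.arg_nonneg_iff]; simp; linarith
    · refine lt_of_le_of_ne (Complex.arg_le_pi _) ?_
      intro hpi
      have := (Complex.arg_eq_pi_iff.mp hpi).2
      simp at this; linarith
  · rcases lt_trichotomy z.re 0 with hr | hr | hr
    · right
      constructor
      · rw [Complex.arg_nonneg_iff]; simp [h]
      · refine lt_of_le_of_ne (Complex.arg_le_pi _) ?_
        intro hpi
        have := (Complex.arg_eq_pi_iff.mp hpi).1
        simp at this; linarith
    · exact absurd (Complex.ext hr h) hz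
    · left
      constructor
      · rw [Complex.arg_nonneg_iff]; simp [h]
      · refine lt_of_le_of_ne (Complex.arg_le_pi _) ?_
        intro hpi
        have := (Complex.arg_eq_pi_iff.mp hpi).1
        linarith
  · left
    constructor
    · rw [Complex.arg_nonneg_iff]; linarith
    · refine lt_of_le_of_ne (Complex.arg_le_pi _) ?_
      intro hpi
      have := (Complex.arg_eq_pi_iff.mp hpi).2
      linarith

lemma real_nonneg_eq {z w : ℂ} (hz : z.im = 0) (hw : w.im = 0) (hz1 : 0 ≤ z.re)
    (hw1 : 0 ≤ w.re) (h : Complex.abs z = Complex.abs w) : z = w := by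
  have az : Complex.abs z = z.re := by
    rw [Complex.abs_apply, Complex.normSq_apply, hz]
    rw [show z.re * z.re + 0 * 0 = z.re ^ 2 by ring, Real.sqrt_sq hz1]
  have aw : Complex.abs w = w.re := by
    rw [Complex.abs_apply, Complex.normSq_apply, hw]
    rw [show w.re * w.re + 0 * 0 = w.re ^ 2 by ring, Real.sqrt_sq hw1]
  rw [az, aw] at h
  exact Complex.ext h (hz.trans hw.symm)

lemma exists_sq (w : ℂ) : ∃ z : ℂ, z ^ 2 = w := by
  obtain ⟨z, hz⟩ := IsAlgClosed.exists_pow_nat_eq w (n := 2) (by norm_num)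
  exact ⟨z, hz⟩

/-- The diagonal target matrix in case (ii). -/
noncomputable def Dm (q : ℝ) (α : ℂ) : M2 := !![α + ((q : ℂ) ^ 2)⁻¹, 0; 0, α - 1]

/-- The target matrix in case (iii). -/
noncomputable def Tm (q : ℝ) (p : ℂ × ℝ × ℂ) : M2 :=
  !![p.1 + ((q : ℂ) ^ 2)⁻¹ * p.2.2, 1 + (p.2.1 : ℂ); 1 - (p.2.1 : ℂ), p.1 - p.2.2]

noncomputable def Ng (q : ℝ) (x : M2) : ℂ := (x 0 0 - x 1 1) / (((q : ℂ) ^ 2)⁻¹ + 1)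
noncomputable def Na (q : ℝ) (x : M2) : ℂ := x 1 1 + Ng q x

lemma Na_add (q : ℝ) (hq : q ∈ Set.Ioo (0:ℝ) 1) (x : M2) :
    Na q x + ((q : ℂ) ^ 2)⁻¹ * Ng q x = x 0 0 := by
  have h := hp1ne hq
  have h2 : Ng q x * (((q : ℂ) ^ 2)⁻¹ + 1) = x 0 0 - x 1 1 := by
    rw [Ng, div_mul_cancel₀ _ h]
  rw [Na]
  linear_combination h2

lemma Na_sub (q : ℝ) (x : M2) : Na q x - Ng q x = x 1 1 := by rw [Na]; ring

section caseC
variable {q : ℝ} (hq : q ∈ Set.Ioo (0:ℝ) 1) (x : M2)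
include hq

/-- If `π` preserves `ψ_q` and maps `span{x}` to `span{Tm q p}` with `p ∈ J1C`, extract the
scaling factor and its constraints. -/
lemma spanData (hx0 : x ≠ 0) (p : ℂ × ℝ × ℂ) (hp : J1C p)
    (π : M2 ≃ₐ[ℂ] M2) (hπ : PreservesPsiq q π)
    (hmap : Submodule.map π.toLinearMap (Submodule.span ℂ ({x} : Set M2)) =
      Submodule.span ℂ ({Tm q p} : Set M2)) :
    ∃ s : ℂ, s ≠ 0 ∧ s * p.1 = Na q x ∧ s * p.2.2 = Ng q x ∧
      Complex.abs s * (1 + p.2.1) = Complex.abs (x 0 1) ∧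
      Complex.abs s * (1 - p.2.1) = Complex.abs (x 1 0) ∧
      s ^ 2 * ((1 + (p.2.1 : ℂ)) * (1 - (p.2.1 : ℂ))) = x 0 1 * x 1 0 := by
  rw [map_span_gen] at hmap
  have hπx0 : π x ≠ 0 := by
    intro h
    exact hx0 (by simpa using congrArg π.symm h)
  obtain ⟨s, hs0, hsx⟩ := exists_smul_of_span_eq hπx0 hmap
  have e00 : π x 0 0 = s * (p.1 + ((q : ℂ) ^ 2)⁻¹ * p.2.2) := by
    rw [hsx]; simp [Tm]
  have e11 : π x 1 1 = s * (p.1 - p.2.2) := by rw [hsx]; simp [Tm]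
  have e01 : π x 0 1 = s * (1 + (p.2.1 : ℂ)) := by rw [hsx]; simp [Tm]
  have e10 : π x 1 0 = s * (1 - (p.2.1 : ℂ)) := by rw [hsx]; simp [Tm]
  have i00 := entry00 hq hπ x
  have i11 := entry11 hq hπ x
  have iprod := offprod hq hπ x
  have iab01 := offabs01 hq hπ x
  have iab10 := offabs10 hq hπ x
  have hβ1 : (0:ℝ) ≤ 1 + p.2.1 := by have := hp.1.1; linarith
  have hβ2 : (0:ℝ) ≤ 1 - p.2.1 := by have := hp.1.2; linarith
  refine ⟨s, hs0, ?_, ?_, ?_, ?_, ?_⟩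
  · -- s * α = Na
    have h1 : x 0 0 = s * p.1 + ((q : ℂ) ^ 2)⁻¹ * (s * p.2.2) := by
      rw [← i00, e00]; ring
    have h2 : x 1 1 = s * p.1 - s * p.2.2 := by rw [← i11, e11]; ring
    -- From h1 - h2 : (p+1) * (s * γ) = x00 - x11, so s*γ = Ng, then s*α = Na.
    have hγ : s * p.2.2 = Ng q x := by
      rw [Ng]
      rw [eq_div_iff (hp1ne hq)]
      linear_combination h2 - h1
    rw [Na, ← hγ]
    linear_combination -h2
  · have h1 : x 0 0 = s * p.1 + ((q : ℂ) ^ 2)⁻¹ * (s * p.2.2) := by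
      rw [← i00, e00]; ring
    have h2 : x 1 1 = s * p.1 - s * p.2.2 := by rw [← i11, e11]; ring
    rw [Ng, eq_div_iff (hp1ne hq)]
    linear_combination h2 - h1
  · rw [← iab01, e01]
    rw [show (1 + (p.2.1 : ℂ)) = ((1 + p.2.1 : ℝ) : ℂ) by push_cast; ring]
    rw [_root_.map_mul, Complex.abs_ofReal, abs_of_nonneg hβ1]
  · rw [← iab10, e10]
    rw [show (1 - (p.2.1 : ℂ)) = ((1 - p.2.1 : ℝ) : ℂ) by push_cast; ring]
    rw [_root_.map_mul, Complex.abs_ofReal, abs_of_nonneg hβ2]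
  · rw [← iprod, e01, e10]; ring

end caseC

lemma caseC_unique {q : ℝ} (hq : q ∈ Set.Ioo (0:ℝ) 1) (x : M2) (hx0 : x ≠ 0)
    (hbc : ¬ (x 0 1 = 0 ∧ x 1 0 = 0)) (p₁ p₂ : ℂ × ℝ × ℂ) (hp₁ : J1C p₁) (hp₂ : J1C p₂)
    (π₁ π₂ : M2 ≃ₐ[ℂ] M2) (hπ₁ : PreservesPsiq q π₁) (hπ₂ : PreservesPsiq q π₂)
    (hm₁ : Submodule.map π₁.toLinearMap (Submodule.span ℂ ({x} : Set M2)) =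
      Submodule.span ℂ ({Tm q p₁} : Set M2))
    (hm₂ : Submodule.map π₂.toLinearMap (Submodule.span ℂ ({x} : Set M2)) =
      Submodule.span ℂ ({Tm q p₂} : Set M2)) : p₁ = p₂ := by
  obtain ⟨s₁, hs₁0, hα₁, hγ₁, hab₁, hcd₁, hsq₁⟩ := spanData hq x hx0 p₁ hp₁ π₁ hπ₁ hm₁
  obtain ⟨s₂, hs₂0, hα₂, hγ₂, hab₂, hcd₂, hsq₂⟩ := spanData hq x hx0 p₂ hp₂ π₂ hπ₂ hm₂
  obtain ⟨α₁, β₁, γ₁⟩ := p₁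
  obtain ⟨α₂, β₂, γ₂⟩ := p₂
  simp only at hα₁ hγ₁ hab₁ hcd₁ hsq₁ hα₂ hγ₂ hab₂ hcd₂ hsq₂ hp₁ hp₂
  set b := x 0 1 with hbdef
  set c := x 1 0 with hcdef
  set ab := Complex.abs b with habdef
  set ac := Complex.abs c with hacdef
  have hab0 : 0 ≤ ab := Complex.abs.nonneg b
  have hac0 : 0 ≤ ac := Complex.abs.nonneg c
  have hr : 0 < ab + ac := by
    rcases not_and_or.mp hbc with h | h
    · have : 0 < ab := Complex.abs.pos h
      linarith
    · have : 0 < ac := Complex.abs.pos h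
      linarith
  -- moduli of s₁, s₂
  have habs₁ : Complex.abs s₁ = (ab + ac) / 2 := by
    have h : Complex.abs s₁ * (1 + β₁) + Complex.abs s₁ * (1 - β₁) = 2 * Complex.abs s₁ := by
      ring
    rw [hab₁, hcd₁] at h
    linarith
  have habs₂ : Complex.abs s₂ = (ab + ac) / 2 := by
    have h : Complex.abs s₂ * (1 + β₂) + Complex.abs s₂ * (1 - β₂) = 2 * Complex.abs s₂ := by
      ring
    rw [hab₂, hcd₂] at h
    linarith
  -- β is determined
  have hβr₁ : β₁ * (ab + ac) = ab - ac := by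
    rw [habs₁] at hab₁ hcd₁
    linear_combination hab₁ - hcd₁
  have hβr₂ : β₂ * (ab + ac) = ab - ac := by
    rw [habs₂] at hab₂ hcd₂
    linear_combination hab₂ - hcd₂
  have hββ : β₁ = β₂ := mul_right_cancel₀ (ne_of_gt hr) (hβr₁.trans hβr₂.symm)
  -- helper for absolute values
  have absof : ∀ (s s' t t' : ℂ), s * t = s' * t' → Complex.abs s = Complex.abs s' →
      s ≠ 0 → Complex.abs t = Complex.abs t' := by
    intro s s' t t' h hss hs
    have := congrArg Complex.abs h
    rw [_root_.map_mul, _root_.map_mul, hss] at this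
    exact mul_left_cancel₀ (by simpa using (hss ▸ (Complex.abs.ne_zero hs) : Complex.abs s' ≠ 0)) this
  have habsαα : Complex.abs α₁ = Complex.abs α₂ :=
    absof s₁ s₂ α₁ α₂ (hα₁.trans hα₂.symm) (habs₁.trans habs₂.symm) hs₁0
  have habsγγ : Complex.abs γ₁ = Complex.abs γ₂ :=
    absof s₁ s₂ γ₁ γ₂ (hγ₁.trans hγ₂.symm) (habs₁.trans habs₂.symm) hs₁0
  by_cases hc0 : c = 0
  · -- β = 1 branch
    have hac : ac = 0 := by rw [hacdef, hc0]; simp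
    have hb0 : b ≠ 0 := fun h => hbc ⟨h, hc0⟩
    have hβ1 : β₁ = 1 := by
      have h0 := hβr₁
      rw [hac] at h0 hr
      have h2 : (β₁ - 1) * ab = 0 := by linear_combination h0
      rcases mul_eq_zero.mp h2 with h | h
      · linarith [sub_eq_zero.mp h]
      · simp only [add_zero] at hr
        exact absurd h (ne_of_gt hr)
    have hβ2 : β₂ = 1 := hββ ▸ hβ1
    by_cases hNa : Na q x = 0
    · -- α₁ = α₂ = 0
      have hα₁0 : α₁ = 0 := by
        have : s₁ * α₁ = 0 := by rw [hα₁, hNa]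
        exact (mul_eq_zero.mp this).resolve_left hs₁0
      have hα₂0 : α₂ = 0 := by
        have : s₂ * α₂ = 0 := by rw [hα₂, hNa]
        exact (mul_eq_zero.mp this).resolve_left hs₂0
      have hg₁ := hp₁.2.2.1 (Or.inl hβ1) hα₁0
      have hg₂ := hp₂.2.2.1 (Or.inl hβ2) hα₂0
      have : γ₁ = γ₂ := real_nonneg_eq hg₁.1 hg₂.1 hg₁.2 hg₂.2 habsγγ
      simp [hα₁0, hα₂0, hββ, this]
    · have hα₁0 : α₁ ≠ 0 := by
        intro h; rw [h, mul_zero] at hα₁; exact hNa hα₁.symm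
      have hα₂0 : α₂ ≠ 0 := by
        intro h; rw [h, mul_zero] at hα₂; exact hNa hα₂.symm
      have hg₁ := hp₁.2.1 (Or.inl hβ1) hα₁0
      have hg₂ := hp₂.2.1 (Or.inl hβ2) hα₂0
      have hαα : α₁ = α₂ := real_nonneg_eq hg₁.1 hg₂.1 (le_of_lt hg₁.2) (le_of_lt hg₂.2) habsαα
      have hss : s₁ = s₂ := by
        have : s₁ * α₁ = s₂ * α₁ := by rw [hα₁, hαα, hα₂]
        exact mul_right_cancel₀ hα₁0 this
      have hγγ : γ₁ = γ₂ := by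
        have : s₁ * γ₁ = s₁ * γ₂ := by rw [hγ₁, hss, hγ₂]
        exact mul_left_cancel₀ hs₁0 this
      simp [hαα, hββ, hγγ]
  · by_cases hb0 : b = 0
    · -- β = -1 branch
      have hab' : ab = 0 := by rw [habdef, hb0]; simp
      have hβ1 : β₁ = -1 := by
        have := hβr₁
        rw [hab'] at this hr
        simp only [zero_add, zero_sub] at this hr
        have h2 : (β₁ + 1) * ac = 0 := by linear_combination this
        rcases mul_eq_zero.mp h2 with h | h
        · linarith
        · exact absurd h (ne_of_gt hr)
      have hβ2 : β₂ = -1 := hββ ▸ hβ1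
      by_cases hNa : Na q x = 0
      · have hα₁0 : α₁ = 0 := by
          have : s₁ * α₁ = 0 := by rw [hα₁, hNa]
          exact (mul_eq_zero.mp this).resolve_left hs₁0
        have hα₂0 : α₂ = 0 := by
          have : s₂ * α₂ = 0 := by rw [hα₂, hNa]
          exact (mul_eq_zero.mp this).resolve_left hs₂0
        have hg₁ := hp₁.2.2.1 (Or.inr hβ1) hα₁0
        have hg₂ := hp₂.2.2.1 (Or.inr hβ2) hα₂0
        have : γ₁ = γ₂ := real_nonneg_eq hg₁.1 hg₂.1 hg₁.2 hg₂.2 habsγγ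
        simp [hα₁0, hα₂0, hββ, this]
      · have hα₁0 : α₁ ≠ 0 := by
          intro h; rw [h, mul_zero] at hα₁; exact hNa hα₁.symm
        have hα₂0 : α₂ ≠ 0 := by
          intro h; rw [h, mul_zero] at hα₂; exact hNa hα₂.symm
        have hg₁ := hp₁.2.1 (Or.inr hβ1) hα₁0
        have hg₂ := hp₂.2.1 (Or.inr hβ2) hα₂0
        have hαα : α₁ = α₂ := real_nonneg_eq hg₁.1 hg₂.1 (le_of_lt hg₁.2) (le_of_lt hg₂.2) habsαα
        have hss : s₁ = s₂ := by
          have : s₁ * α₁ = s₂ * α₁ := by rw [hα₁, hαα, hα₂]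
          exact mul_right_cancel₀ hα₁0 this
        have hγγ : γ₁ = γ₂ := by
          have : s₁ * γ₁ = s₁ * γ₂ := by rw [hγ₁, hss, hγ₂]
          exact mul_left_cancel₀ hs₁0 this
        simp [hαα, hββ, hγγ]
    · -- generic branch: both b and c nonzero, -1 < β < 1
      have habp : 0 < ab := Complex.abs.pos hb0
      have hacp : 0 < ac := Complex.abs.pos hc0
      have hβlt : β₁ < 1 := by nlinarith
      have hβgt : -1 < β₁ := by nlinarith
      have hfac : ((1 : ℂ) + (β₁ : ℂ)) * (1 - (β₁ : ℂ)) ≠ 0 := by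
        have h1 : (0:ℝ) < (1 + β₁) * (1 - β₁) := by nlinarith
        have : (((1 + β₁) * (1 - β₁) : ℝ) : ℂ) = ((1 : ℂ) + (β₁ : ℂ)) * (1 - (β₁ : ℂ)) := by
          push_cast; ring
        rw [← this]
        simp only [ne_eq, Complex.ofReal_eq_zero]
        linarith
      have hss : s₁ ^ 2 = s₂ ^ 2 := by
        rw [← hββ] at hsq₂
        exact mul_right_cancel₀ hfac (hsq₁.trans hsq₂.symm)
      have : (s₁ - s₂) * (s₁ + s₂) = 0 := by linear_combination hss
      rcases mul_eq_zero.mp this with h | h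
      · have hs : s₁ = s₂ := by linear_combination h
        have hαα : α₁ = α₂ := by
          have : s₁ * α₁ = s₁ * α₂ := by rw [hα₁, hs, hα₂]
          exact mul_left_cancel₀ hs₁0 this
        have hγγ : γ₁ = γ₂ := by
          have : s₁ * γ₁ = s₁ * γ₂ := by rw [hγ₁, hs, hγ₂]
          exact mul_left_cancel₀ hs₁0 this
        simp [hαα, hββ, hγγ]
      · have hs : s₁ = -s₂ := by linear_combination h
        have hαneg : α₂ = -α₁ := by
          have h2 : s₂ * α₂ = s₂ * (-α₁) := by
            rw [hα₂, ← hα₁, hs]; ring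
          exact mul_left_cancel₀ hs₂0 h2
        have hγneg : γ₂ = -γ₁ := by
          have h2 : s₂ * γ₂ = s₂ * (-γ₁) := by
            rw [hγ₂, ← hγ₁, hs]; ring
          exact mul_left_cancel₀ hs₂0 h2
        by_cases hA : α₁ = 0
        · by_cases hG : γ₁ = 0
          · simp [hA, hG, hββ, hαneg, hγneg]
          · exfalso
            have harg₁ := hp₁.2.2.2.2 ⟨hβgt, hβlt⟩ hA
            have harg₂ := hp₂.2.2.2.2 ⟨hββ ▸ hβgt, hββ ▸ hβlt⟩ (by rw [hαneg, hA, neg_zero])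
            rw [hγneg] at harg₂
            exact arg_exclusive hG harg₁ harg₂
        · exfalso
          have harg₁ := hp₁.2.2.2.1 ⟨hβgt, hβlt⟩ hA
          have harg₂ := hp₂.2.2.2.1 ⟨hββ ▸ hβgt, hββ ▸ hβlt⟩ (by rw [hαneg]; simpa using hA)
          rw [hαneg] at harg₂
          exact arg_exclusive hA harg₁ harg₂

lemma sq_abs_eq {s : ℂ} {t : ℝ} (ht : 0 ≤ t) (h : Complex.abs s ^ 2 = t ^ 2) :
    Complex.abs s = t := by
  have h2 : (Complex.abs s - t) * (Complex.abs s + t) = 0 := by linear_combination h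
  rcases mul_eq_zero.mp h2 with h3 | h3
  · linarith [sub_eq_zero.mp h3]
  · have := Complex.abs.nonneg s
    have hs : Complex.abs s = 0 := by linarith
    have h4 : t = 0 := by linarith
    rw [hs, h4]

lemma buildC {q : ℝ} (hq : q ∈ Set.Ioo (0:ℝ) 1) (x : M2) (p : ℂ × ℝ × ℂ) (s l : ℂ)
    (hs0 : s ≠ 0) (hl : Complex.abs l = 1)
    (hα : s * p.1 = Na q x) (hγ : s * p.2.2 = Ng q x)
    (h01 : l * x 0 1 = s * (1 + (p.2.1 : ℂ))) (h10 : l⁻¹ * x 1 0 = s * (1 - (p.2.1 : ℂ))) :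
    Submodule.map (phi l (cabs_ne_zero hl)).toLinearMap (Submodule.span ℂ ({x} : Set M2)) =
      Submodule.span ℂ ({Tm q p} : Set M2) := by
  rw [map_span_gen]
  have hx : phi l (cabs_ne_zero hl) x = s • Tm q p := by
    ext i j
    fin_cases i <;> fin_cases j <;> simp [phi_apply, Tm, Matrix.smul_apply]
    · linear_combination -Na_add q hq x - hα - ((q:ℂ)^2)⁻¹ * hγ
    · exact h01
    · exact h10
    · linear_combination -Na_sub q x - hα + hγ
  rw [hx, span_smul_eq hs0]

lemma choose_s (Na Ng : ℂ) (m : ℝ) (hm : 0 < m) :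
    ∃ s α γ : ℂ, s ≠ 0 ∧ Complex.abs s = m ∧ s * α = Na ∧ s * γ = Ng ∧
      (α ≠ 0 → α.im = 0 ∧ 0 < α.re) ∧ (α = 0 → γ.im = 0 ∧ 0 ≤ γ.re) := by
  have hm0 : (m : ℂ) ≠ 0 := by simp [ne_of_gt hm]
  by_cases hNa : Na = 0
  · by_cases hNg : Ng = 0
    · refine ⟨(m : ℂ), 0, 0, hm0, by simp [abs_of_pos hm], by simp [hNa], by simp [hNg],
        fun h => absurd rfl h, fun _ => by simp⟩
    · have hNgm : (Complex.abs Ng : ℂ) ≠ 0 := by simp [Complex.abs.ne_zero hNg]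
      refine ⟨(m : ℂ) * (Ng / (Complex.abs Ng : ℂ)), 0, ((Complex.abs Ng / m : ℝ) : ℂ),
        mul_ne_zero hm0 (div_ne_zero hNg hNgm), ?_, by simp [hNa], ?_, fun h => absurd rfl h,
        fun _ => ⟨by simp, by simp; positivity⟩⟩
      · rw [_root_.map_mul, map_div₀, Complex.abs_ofReal, Complex.abs_ofReal, abs_of_pos hm,
          abs_of_nonneg (Complex.abs.nonneg Ng), div_self (Complex.abs.ne_zero hNg), mul_one]
      · push_cast
        field_simp
  · have hNam : (Complex.abs Na : ℂ) ≠ 0 := by simp [Complex.abs.ne_zero hNa]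
    refine ⟨(m : ℂ) * (Na / (Complex.abs Na : ℂ)), ((Complex.abs Na / m : ℝ) : ℂ), Ng / ((m : ℂ) * (Na / (Complex.abs Na : ℂ))),
      mul_ne_zero hm0 (div_ne_zero hNa hNam), ?_, ?_, ?_, ?_, ?_⟩
    · rw [_root_.map_mul, map_div₀, Complex.abs_ofReal, Complex.abs_ofReal, abs_of_pos hm,
        abs_of_nonneg (Complex.abs.nonneg Na), div_self (Complex.abs.ne_zero hNa), mul_one]
    · push_cast
      field_simp
    · rw [mul_div_cancel₀ _ (mul_ne_zero hm0 (div_ne_zero hNa hNam))]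
    · intro _
      constructor
      · simp
      · simp only [Complex.ofReal_re]
        have := Complex.abs.pos hNa
        positivity
    · intro h
      exfalso
      rw [Complex.ext_iff] at h
      simp only [Complex.ofReal_re, Complex.zero_re] at h
      have h2 : 0 < Complex.abs Na := Complex.abs.pos hNa
      have : 0 < Complex.abs Na / m := by positivity
      linarith [h.1]

lemma choose_s2 (Na Ng w : ℂ) (hw : w ≠ 0) :
    ∃ s : ℂ, s ≠ 0 ∧ s ^ 2 = w ∧
      (Na ≠ 0 → (Na / s).arg ∈ Set.Ico 0 Real.pi) ∧
      (Na = 0 → Ng ≠ 0 → (Ng / s).arg ∈ Set.Ico 0 Real.pi) := by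
  obtain ⟨s₀, hs₀⟩ := exists_sq w
  have hs₀0 : s₀ ≠ 0 := by
    intro h; rw [h] at hs₀; simp at hs₀; exact hw hs₀.symm
  by_cases hNa : Na = 0
  · by_cases hNg : Ng = 0
    · exact ⟨s₀, hs₀0, hs₀, fun h => absurd hNa h, fun _ h => absurd hNg h⟩
    · rcases arg_choice (div_ne_zero hNg hs₀0) with h | h
      · exact ⟨s₀, hs₀0, hs₀, fun h' => absurd hNa h', fun _ _ => h⟩
      · refine ⟨-s₀, neg_ne_zero.mpr hs₀0, by rw [neg_pow]; simp [hs₀], fun h' => absurd hNa h',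
          fun _ _ => ?_⟩
        rw [div_neg]
        exact h
  · rcases arg_choice (div_ne_zero hNa hs₀0) with h | h
    · exact ⟨s₀, hs₀0, hs₀, fun _ => h, fun h' => absurd h' hNa⟩
    · refine ⟨-s₀, neg_ne_zero.mpr hs₀0, by rw [neg_pow]; simp [hs₀], fun _ => ?_,
        fun h' => absurd h' hNa⟩
      rw [div_neg]
      exact h

lemma caseC_exists {q : ℝ} (hq : q ∈ Set.Ioo (0:ℝ) 1) (x : M2) (hx0 : x ≠ 0)
    (hbc : ¬ (x 0 1 = 0 ∧ x 1 0 = 0)) :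
    ∃ p : ℂ × ℝ × ℂ, J1C p ∧ ∃ π : M2 ≃ₐ[ℂ] M2, PreservesPsiq q π ∧
      Submodule.map π.toLinearMap (Submodule.span ℂ ({x} : Set M2)) =
        Submodule.span ℂ ({Tm q p} : Set M2) := by
  set b := x 0 1 with hbdef
  set c := x 1 0 with hcdef
  set ab := Complex.abs b with habdef
  set ac := Complex.abs c with hacdef
  by_cases hc0 : c = 0
  · -- β = 1
    have hb0 : b ≠ 0 := fun h => hbc ⟨h, hc0⟩
    have habp : 0 < ab := Complex.abs.pos hb0
    obtain ⟨s, α, γ, hs0, hsabs, hα, hγ, hcond1, hcond2⟩ :=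
      choose_s (Na q x) (Ng q x) (ab / 2) (by linarith)
    set l := 2 * s / b with hldef
    have hl : Complex.abs l = 1 := by
      rw [hldef, map_div₀, _root_.map_mul, Complex.abs_two, hsabs, ← habdef]
      field_simp
    refine ⟨(α, 1, γ), ?_, phi l (cabs_ne_zero hl), phi_preserves q hl, ?_⟩
    · refine ⟨⟨by norm_num, le_refl 1⟩, fun _ => hcond1, fun _ => hcond2,
        fun h => absurd h.2 (lt_irrefl 1), fun h => absurd h.2 (lt_irrefl 1)⟩
    · refine buildC hq x (α, 1, γ) s l hs0 hl hα hγ ?_ ?_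
      · show l * b = s * (1 + ((1:ℝ) : ℂ))
        rw [hldef, div_mul_cancel₀ _ hb0]
        push_cast
        ring
      · show l⁻¹ * c = s * (1 - ((1:ℝ) : ℂ))
        rw [hc0]
        push_cast
        ring
  · by_cases hb0 : b = 0
    · -- β = -1
      have hacp : 0 < ac := Complex.abs.pos hc0
      obtain ⟨s, α, γ, hs0, hsabs, hα, hγ, hcond1, hcond2⟩ :=
        choose_s (Na q x) (Ng q x) (ac / 2) (by linarith)
      set l := c / (2 * s) with hldef
      have hl : Complex.abs l = 1 := by
        rw [hldef, map_div₀, _root_.map_mul, Complex.abs_two, hsabs, ← hacdef]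
        field_simp
      refine ⟨(α, -1, γ), ?_, phi l (cabs_ne_zero hl), phi_preserves q hl, ?_⟩
      · refine ⟨⟨le_refl (-1), by norm_num⟩, fun _ => hcond1, fun _ => hcond2,
          fun h => absurd h.1 (lt_irrefl (-1)), fun h => absurd h.1 (lt_irrefl (-1))⟩
      · refine buildC hq x (α, -1, γ) s l hs0 hl hα hγ ?_ ?_
        · show l * b = s * (1 + ((-1:ℝ) : ℂ))
          rw [hb0]
          push_cast
          ring
        · show l⁻¹ * c = s * (1 - ((-1:ℝ) : ℂ))
          rw [hldef, inv_div, div_mul_cancel₀ _ hc0]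
          push_cast
          ring
    · -- generic: both nonzero
      have habp : 0 < ab := Complex.abs.pos hb0
      have hacp : 0 < ac := Complex.abs.pos hc0
      set r := ab + ac with hrdef
      have hr : 0 < r := by linarith
      set β : ℝ := (ab - ac) / r with hβdef
      have h1β : 1 + β = 2 * ab / r := by rw [hβdef]; field_simp; ring
      have h2β : 1 - β = 2 * ac / r := by rw [hβdef]; field_simp; ring
      have h1βp : 0 < 1 + β := by rw [h1β]; positivity
      have h2βp : 0 < 1 - β := by rw [h2β]; positivity
      have hdp : 0 < (1 + β) * (1 - β) := mul_pos h1βp h2βp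
      have hdcne : (((1 + β) * (1 - β) : ℝ) : ℂ) ≠ 0 := by
        simp only [ne_eq, Complex.ofReal_eq_zero]
        exact ne_of_gt hdp
      set w : ℂ := b * c / (((1 + β) * (1 - β) : ℝ) : ℂ) with hwdef
      have hw0 : w ≠ 0 := div_ne_zero (mul_ne_zero hb0 hc0) hdcne
      obtain ⟨s, hs0, hsq, hcond1, hcond2⟩ := choose_s2 (Na q x) (Ng q x) w hw0
      -- |s| = r / 2
      have hsabs : Complex.abs s = r / 2 := by
        apply sq_abs_eq (by linarith : (0:ℝ) ≤ r / 2)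
        have h1 : Complex.abs s ^ 2 = ab * ac / ((1 + β) * (1 - β)) := by
          rw [← map_pow, hsq, hwdef, map_div₀, _root_.map_mul, Complex.abs_ofReal,
            abs_of_pos hdp, ← habdef, ← hacdef]
        rw [h1, h1β, h2β]
        field_simp
      have hcast1 : (1 : ℂ) + (β : ℂ) = ((1 + β : ℝ) : ℂ) := by push_cast; ring
      have hcastd : (((1 + β) * (1 - β) : ℝ) : ℂ) = ((1 : ℂ) + (β : ℂ)) * (1 - (β : ℂ)) := by
        push_cast; ring
      have h1βc : (1 : ℂ) + (β : ℂ) ≠ 0 := by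
        rw [hcast1, ne_eq, Complex.ofReal_eq_zero]
        exact ne_of_gt h1βp
      set l := s * ((1 : ℂ) + (β : ℂ)) / b with hldef
      have hl : Complex.abs l = 1 := by
        rw [hldef, map_div₀, _root_.map_mul, hcast1, Complex.abs_ofReal, abs_of_pos h1βp,
          hsabs, h1β, ← habdef]
        field_simp
      have key : s ^ 2 * (((1 : ℂ) + (β : ℂ)) * (1 - (β : ℂ))) = b * c := by
        rw [hsq, hwdef, ← hcastd]
        exact div_mul_cancel₀ _ hdcne
      have hα : s * (Na q x / s) = Na q x := by
        rw [mul_comm]; exact div_mul_cancel₀ _ hs0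
      have hγ : s * (Ng q x / s) = Ng q x := by
        rw [mul_comm]; exact div_mul_cancel₀ _ hs0
      have hβlt : β < 1 := by rw [hβdef, div_lt_one hr]; linarith
      have hβgt : -1 < β := by rw [hβdef, lt_div_iff₀ hr]; linarith
      have hnot : ¬(β = 1 ∨ β = -1) := by
        rintro (h1 | h1)
        · exact absurd h1 (ne_of_lt hβlt)
        · exact absurd h1 (ne_of_gt hβgt)
      refine ⟨(Na q x / s, β, Ng q x / s), ?_, phi l (cabs_ne_zero hl), phi_preserves q hl, ?_⟩
      · refine ⟨⟨le_of_lt hβgt, le_of_lt hβlt⟩,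
          fun h => absurd h hnot, fun h => absurd h hnot,
          fun _ hαne => hcond1 (fun h => hαne (by rw [h, zero_div])), fun _ hα0 => ?_⟩
        have hNa0 : Na q x = 0 := by
          rcases div_eq_zero_iff.mp hα0 with h | h
          · exact h
          · exact absurd h hs0
        by_cases hNg : Ng q x = 0
        · show Complex.arg (Ng q x / s) ∈ Set.Ico 0 Real.pi
          rw [hNg, zero_div, Complex.arg_zero]
          exact ⟨le_refl 0, Real.pi_pos⟩
        · exact hcond2 hNa0 hNg
      · refine buildC hq x (Na q x / s, β, Ng q x / s) s l hs0 hl hα hγ ?_ ?_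
        · show l * b = s * (1 + (β : ℂ))
          rw [hldef]
          exact div_mul_cancel₀ _ hb0
        · show l⁻¹ * c = s * (1 - (β : ℂ))
          rw [hldef, inv_div, div_mul_eq_mul_div, div_eq_iff (mul_ne_zero hs0 h1βc)]
          linear_combination -key

lemma pix_diag {q : ℝ} (hq : q ∈ Set.Ioo (0:ℝ) 1) {π : M2 ≃ₐ[ℂ] M2}
    (hπ : PreservesPsiq q π) (x : M2) (hb : x 0 1 = 0) (hc : x 1 0 = 0) : π x = x := by
  have h01 : π x 0 1 = 0 := by
    have := offabs01 hq hπ x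
    rw [hb] at this
    simp only [map_zero] at this
    exact Complex.abs.eq_zero.mp this
  have h10 : π x 1 0 = 0 := by
    have := offabs10 hq hπ x
    rw [hc] at this
    simp only [map_zero] at this
    exact Complex.abs.eq_zero.mp this
  calc π x = !![π x 0 0, π x 0 1; π x 1 0, π x 1 1] := Matrix.eta_fin_two _
    _ = !![x 0 0, x 0 1; x 1 0, x 1 1] := by
        rw [h01, h10, hb, hc, entry00 hq hπ x, entry11 hq hπ x]
    _ = x := (Matrix.eta_fin_two x).symm

lemma notC_diag {q : ℝ} (hq : q ∈ Set.Ioo (0:ℝ) 1) (x : M2) (hx0 : x ≠ 0)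
    (hb : x 0 1 = 0) (hc : x 1 0 = 0) :
    ¬ ∃ p : ℂ × ℝ × ℂ, J1C p ∧ ∃ π : M2 ≃ₐ[ℂ] M2, PreservesPsiq q π ∧
      Submodule.map π.toLinearMap (Submodule.span ℂ ({x} : Set M2)) =
        Submodule.span ℂ ({Tm q p} : Set M2) := by
  rintro ⟨p, hp, π, hπ, hmap⟩
  rw [map_span_gen, pix_diag hq hπ x hb hc] at hmap
  obtain ⟨s, hs0, hsx⟩ := exists_smul_of_span_eq hx0 hmap
  have e01 : (0:ℂ) = s * (1 + (p.2.1 : ℂ)) := by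
    rw [← hb]; rw [hsx]; simp [Tm]
  have e10 : (0:ℂ) = s * (1 - (p.2.1 : ℂ)) := by
    rw [← hc]; rw [hsx]; simp [Tm]
  have h1 : (1 : ℂ) + (p.2.1 : ℂ) = 0 := by
    rcases mul_eq_zero.mp e01.symm with h | h
    · exact absurd h hs0
    · exact h
  have h2 : (1 : ℂ) - (p.2.1 : ℂ) = 0 := by
    rcases mul_eq_zero.mp e10.symm with h | h
    · exact absurd h hs0
    · exact h
  have : (2 : ℂ) = 0 := by linear_combination h1 + h2
  norm_num at this

lemma notB_nondiag {q : ℝ} (hq : q ∈ Set.Ioo (0:ℝ) 1) (x : M2) (hx0 : x ≠ 0)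
    (hbc : ¬ (x 0 1 = 0 ∧ x 1 0 = 0)) :
    ¬ ∃ α : ℂ, ∃ π : M2 ≃ₐ[ℂ] M2, PreservesPsiq q π ∧
      Submodule.map π.toLinearMap (Submodule.span ℂ ({x} : Set M2)) =
        Submodule.span ℂ ({Dm q α} : Set M2) := by
  rintro ⟨α, π, hπ, hmap⟩
  rw [map_span_gen] at hmap
  have hπx0 : π x ≠ 0 := fun h => hx0 (by simpa using congrArg π.symm h)
  obtain ⟨s, hs0, hsx⟩ := exists_smul_of_span_eq hπx0 hmap
  have e01 : π x 0 1 = 0 := by rw [hsx]; simp [Dm]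
  have e10 : π x 1 0 = 0 := by rw [hsx]; simp [Dm]
  have hb : x 0 1 = 0 := by
    have := offabs01 hq hπ x
    rw [e01] at this
    simp only [map_zero] at this
    exact Complex.abs.eq_zero.mp this.symm
  have hc : x 1 0 = 0 := by
    have := offabs10 hq hπ x
    rw [e10] at this
    simp only [map_zero] at this
    exact Complex.abs.eq_zero.mp this.symm
  exact hbc ⟨hb, hc⟩

lemma notB_scalar {q : ℝ} (hq : q ∈ Set.Ioo (0:ℝ) 1) (x : M2) (hx0 : x ≠ 0)
    (hb : x 0 1 = 0) (hc : x 1 0 = 0) (had : x 0 0 = x 1 1) :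
    ¬ ∃ α : ℂ, ∃ π : M2 ≃ₐ[ℂ] M2, PreservesPsiq q π ∧
      Submodule.map π.toLinearMap (Submodule.span ℂ ({x} : Set M2)) =
        Submodule.span ℂ ({Dm q α} : Set M2) := by
  rintro ⟨α, π, hπ, hmap⟩
  rw [map_span_gen, pix_diag hq hπ x hb hc] at hmap
  obtain ⟨s, hs0, hsx⟩ := exists_smul_of_span_eq hx0 hmap
  have e00 : x 0 0 = s * (α + ((q:ℂ)^2)⁻¹) := by rw [hsx]; simp [Dm]
  have e11 : x 1 1 = s * (α - 1) := by rw [hsx]; simp [Dm]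
  have h2 : s * (((q:ℂ)^2)⁻¹ + 1) = 0 := by
    rw [had] at e00
    linear_combination e11 - e00
  rcases mul_eq_zero.mp h2 with h | h
  · exact hs0 h
  · exact hp1ne hq h

lemma caseB_main {q : ℝ} (hq : q ∈ Set.Ioo (0:ℝ) 1) (x : M2) (hx0 : x ≠ 0)
    (hb : x 0 1 = 0) (hc : x 1 0 = 0) (had : x 0 0 ≠ x 1 1) :
    ∃! α : ℂ, ∃ π : M2 ≃ₐ[ℂ] M2, PreservesPsiq q π ∧
      Submodule.map π.toLinearMap (Submodule.span ℂ ({x} : Set M2)) =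
        Submodule.span ℂ ({Dm q α} : Set M2) := by
  have hNg0 : Ng q x ≠ 0 := by
    rw [Ng]
    exact div_ne_zero (sub_ne_zero.mpr had) (hp1ne hq)
  set α := Na q x / Ng q x with hαdef
  have hα : Ng q x * α = Na q x := by
    rw [hαdef, mul_comm]; exact div_mul_cancel₀ _ hNg0
  have hxeq : x = Ng q x • Dm q α := by
    ext i j
    fin_cases i <;> fin_cases j <;> simp [Dm, Matrix.smul_apply]
    · linear_combination -Na_add q hq x - hα
    · exact hb
    · exact hc
    · linear_combination -Na_sub q x - hα
  refine ⟨α, ⟨AlgEquiv.refl, refl_preserves q, ?_⟩, ?_⟩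
  · have hid : Submodule.map (AlgEquiv.refl : M2 ≃ₐ[ℂ] M2).toLinearMap
        (Submodule.span ℂ ({x} : Set M2)) = Submodule.span ℂ ({x} : Set M2) := by
      rw [map_span_gen]; rfl
    rw [hid]
    conv_lhs => rw [hxeq]
    rw [span_smul_eq hNg0]
  · rintro α' ⟨π, hπ, hmap⟩
    rw [map_span_gen, pix_diag hq hπ x hb hc] at hmap
    obtain ⟨s, hs0, hsx⟩ := exists_smul_of_span_eq hx0 hmap
    have e00 : x 0 0 = s * (α' + ((q:ℂ)^2)⁻¹) := by rw [hsx]; simp [Dm]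
    have e11 : x 1 1 = s * (α' - 1) := by rw [hsx]; simp [Dm]
    have hNg : Ng q x * (((q:ℂ)^2)⁻¹ + 1) = x 0 0 - x 1 1 := by
      rw [Ng, div_mul_cancel₀ _ (hp1ne hq)]
    have hsNg : s = Ng q x := by
      have h2 : s * (((q:ℂ)^2)⁻¹ + 1) = Ng q x * (((q:ℂ)^2)⁻¹ + 1) := by
        rw [hNg]
        linear_combination e11 - e00
      exact mul_right_cancel₀ (hp1ne hq) h2
    have hNa' : Ng q x * α' = Na q x := by
      rw [Na, ← hsNg]
      linear_combination -e11
    have := hNa'.trans hα.symm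
    exact mul_left_cancel₀ hNg0 this

lemma span_one_entries {x : M2} (hx0 : x ≠ 0)
    (h : Submodule.span ℂ ({x} : Set M2) = Submodule.span ℂ ({(1:M2)} : Set M2)) :
    x 0 1 = 0 ∧ x 1 0 = 0 ∧ x 0 0 = x 1 1 := by
  obtain ⟨s, hs0, hsx⟩ := exists_smul_of_span_eq hx0 h
  refine ⟨by rw [hsx]; simp [Matrix.one_apply], by rw [hsx]; simp [Matrix.one_apply], ?_⟩
  rw [hsx]
  simp [Matrix.one_apply]

/-- Classification of one-dimensional quantum edge spaces on `(M₂, ψ_q)`, `q ∈ (0,1)`: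
exactly one of (i) `S = ℂ·I₂`; (ii) `π(S) = ℂ·diag(α+q⁻², α−1)` for a unique `α ∈ ℂ`;
(iii) `π(S) = ℂ·T` for a unique `(α, β, γ) ∈ J^(1C)`. -/
theorem stmt13 (q : ℝ) (hq : q ∈ Set.Ioo (0 : ℝ) 1)
    (S : Submodule ℂ (Matrix (Fin 2) (Fin 2) ℂ)) (hS : Module.finrank ℂ S = 1) :
    let A : Prop := S = Submodule.span ℂ
      ({(1 : Matrix (Fin 2) (Fin 2) ℂ)} : Set (Matrix (Fin 2) (Fin 2) ℂ))
    let B : Prop := ∃! α : ℂ,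
      ∃ π : Matrix (Fin 2) (Fin 2) ℂ ≃ₐ[ℂ] Matrix (Fin 2) (Fin 2) ℂ, PreservesPsiq q π ∧
        Submodule.map π.toLinearMap S =
          Submodule.span ℂ
            ({!![α + ((q : ℂ) ^ 2)⁻¹, 0; 0, α - 1]} : Set (Matrix (Fin 2) (Fin 2) ℂ))
    let C : Prop := ∃! p : ℂ × ℝ × ℂ, J1C p ∧
      ∃ π : Matrix (Fin 2) (Fin 2) ℂ ≃ₐ[ℂ] Matrix (Fin 2) (Fin 2) ℂ, PreservesPsiq q π ∧
        Submodule.map π.toLinearMap S =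
          Submodule.span ℂ
            ({!![p.1 + ((q : ℂ) ^ 2)⁻¹ * p.2.2, 1 + (p.2.1 : ℂ);
                 1 - (p.2.1 : ℂ), p.1 - p.2.2]} : Set (Matrix (Fin 2) (Fin 2) ℂ))
    (A ∧ ¬B ∧ ¬C) ∨ (¬A ∧ B ∧ ¬C) ∨ (¬A ∧ ¬B ∧ C) := by
  intro A B C
  obtain ⟨x, hx0, hxS⟩ := gen_of_finrank_one S hS
  subst hxS
  by_cases hbc : x 0 1 = 0 ∧ x 1 0 = 0
  · obtain ⟨hb, hc⟩ := hbc
    by_cases had : x 0 0 = x 1 1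
    · -- case A
      refine Or.inl ⟨?_, ?_, ?_⟩
      · show Submodule.span ℂ ({x} : Set M2) = Submodule.span ℂ ({(1:M2)} : Set M2)
        have hxe : x = x 0 0 • (1 : M2) := by
          have h1 : (x 0 0 • (1:M2)) = !![x 0 0, 0; 0, x 0 0] := by
            ext i j
            fin_cases i <;> fin_cases j <;> simp [Matrix.one_apply]
          rw [h1]
          calc x = !![x 0 0, x 0 1; x 1 0, x 1 1] := Matrix.eta_fin_two _
            _ = !![x 0 0, 0; 0, x 0 0] := by rw [hb, hc, had]
        have ha0 : x 0 0 ≠ 0 := by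
          intro h
          apply hx0
          rw [hxe, h, zero_smul]
        rw [hxe, span_smul_eq ha0]
      · exact fun h => notB_scalar hq x hx0 hb hc had h.exists
      · exact fun h => notC_diag hq x hx0 hb hc h.exists
    · -- case B
      refine Or.inr (Or.inl ⟨?_, ?_, ?_⟩)
      · exact fun h => had (span_one_entries hx0 h).2.2
      · exact caseB_main hq x hx0 hb hc had
      · exact fun h => notC_diag hq x hx0 hb hc h.exists
  · -- case C
    refine Or.inr (Or.inr ⟨?_, ?_, ?_⟩)
    · exact fun h => hbc ⟨(span_one_entries hx0 h).1, (span_one_entries hx0 h).2.1⟩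
    · exact fun h => notB_nondiag hq x hx0 hbc h.exists
    · obtain ⟨p, hp, π, hπ, hmap⟩ := caseC_exists hq x hx0 hbc
      refine ⟨p, ⟨hp, π, hπ, hmap⟩, ?_⟩
      rintro p' ⟨hp', π', hπ', hmap'⟩
      exact caseC_unique hq x hx0 hbc p' p hp' hp π' π hπ' hπ hmap' hmap
end

section
/- Let q ∈ (0,1). If π is a *-automorphism of M₂(ℂ) satisfying Tr(ρ_q·π(x)) = Tr(ρ_q·x) for all x ∈ M₂(ℂ), then π(σ₃) = σ₃ and there exist a, b ∈ ℝ with a² + b² = 1 such that π(σ₁) = a·σ₁ + b·σ₂ and π(σ₂) = −b·σ₁ + a·σ₂. Conversely, for all a, b ∈ ℝ with a² + b² = 1 there exists a *-automorphism π of M₂(ℂ) with Tr(ρ_q·π(x)) = Tr(ρ_q·x) for all x, π(σ₃) = σ₃, π(σ₁) = a·σ₁ + b·σ₂ and π(σ₂) = −b·σ₁ + a·σ₂. -/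
open Matrix

def pauli1 : Matrix (Fin 2) (Fin 2) ℂ := !![0, 1; 1, 0]

def pauli2 : Matrix (Fin 2) (Fin 2) ℂ := !![0, -Complex.I; Complex.I, 0]

def pauli3 : Matrix (Fin 2) (Fin 2) ℂ := !![1, 0; 0, -1]

/-!
Every algebra automorphism of a matrix algebra preserves the trace, so `Tr(ρ_q · π x) = Tr(ρ_q · x)`
for all `x` says exactly that `π ρ_q = ρ_q`. Since `q² ≠ 1`, this means that `π` fixes the matrix
unit `E₀₀`, hence also `E₁₁ = 1 - E₀₀`. Then `π E₀₁ = E₀₀ (π E₀₁) E₁₁` is a multiple `w E₀₁`,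
compatibility with `ᴴ` gives `π E₁₀ = w̄ E₁₀`, and `E₀₁ E₁₀ = E₀₀` forces `|w| = 1`; writing
`w = a - b i` yields the rotation of `σ₁, σ₂`. Conversely, conjugation by the diagonal unitary
`diag(1, a + b i)` fixes `E₀₀` and acts on `E₀₁, E₁₀` in exactly this way.
-/

theorem Matrix.diagonal_mul_single_mul_diagonal {R n : Type*} [Semiring R] [Fintype n]
    [DecidableEq n] (d e : n → R) (i j : n) (c : R) :
    diagonal d * single i j c * diagonal e = single i j (d i * c * e j) := by
  ext k l
  simp only [mul_diagonal, diagonal_mul, single_apply]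
  split_ifs with h
  · obtain ⟨rfl, rfl⟩ := h; rfl
  · simp

section
variable {K n : Type*} [Field K] [Fintype n] [DecidableEq n]

theorem Matrix.trace_mul_algEquiv_eq_iff (π : Matrix n n K ≃ₐ[K] Matrix n n K)
    (ρ : Matrix n n K) : (∀ x, trace (ρ * π x) = trace (ρ * x)) ↔ π ρ = ρ := by
  have h : ∀ x, trace (ρ * π x) = trace (π.symm ρ * x) := fun x => by
    rw [← trace_map π (π.symm ρ * x), map_mul, π.apply_symm_apply]
  simp only [h, ← ext_iff_trace_mul_right]
  exact π.symm_apply_eq.trans eq_comm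

theorem AlgEquiv.map_single_eq_single_apply (π : Matrix n n K ≃ₐ[K] Matrix n n K) {i j : n}
    (hi : π (single i i 1) = single i i 1) (hj : π (single j j 1) = single j j 1) :
    π (single i j 1) = single i j (π (single i j 1) i j) := by
  have h : single i i (1 : K) * single i j 1 * single j j 1 = single i j 1 := by simp
  conv_lhs => rw [← h, map_mul, map_mul, hi, hj, single_mul_mul_single, one_mul, mul_one]

variable [StarRing K]

theorem AlgEquiv.map_single_swap_eq (π : Matrix n n K ≃ₐ[K] Matrix n n K)
    (hstar : ∀ x, π xᴴ = (π x)ᴴ) {i j : n}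
    (hi : π (single i i 1) = single i i 1) (hj : π (single j j 1) = single j j 1) :
    π (single j i 1) = single j i (star (π (single i j 1) i j)) := by
  have h : single j i (1 : K) = (single i j 1)ᴴ := by simp
  conv_lhs => rw [h, hstar, π.map_single_eq_single_apply hi hj, conjTranspose_single]

theorem AlgEquiv.apply_mul_star_apply_eq_one (π : Matrix n n K ≃ₐ[K] Matrix n n K)
    (hstar : ∀ x, π xᴴ = (π x)ᴴ) {i j : n}
    (hi : π (single i i 1) = single i i 1) (hj : π (single j j 1) = single j j 1) :
    π (single i j 1) i j * star (π (single i j 1) i j) = 1 := by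
  have h := congrArg π (single_mul_single_same (c := (1 : K)) i j i 1)
  rw [map_mul, π.map_single_eq_single_apply hi hj, π.map_single_swap_eq hstar hi hj,
    single_mul_single_same, mul_one, hi] at h
  simpa using congrFun (congrFun h i) i

end

open Complex

local notation "M₂" => Matrix (Fin 2) (Fin 2) ℂ

theorem rhoq_eq (q : ℝ) :
    rhoq q = (1 + (q : ℂ) ^ 2) • (1 + (((q : ℂ) ^ 2)⁻¹ - 1) • single 0 0 1) := by
  rw [rhoq]
  congr 1
  ext i j; fin_cases i <;> fin_cases j <;> simp

theorem map_rhoq_of_map_single (π : M₂ ≃ₐ[ℂ] M₂) (q : ℝ)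
    (h : π (single 0 0 1) = single 0 0 1) : π (rhoq q) = rhoq q := by
  rw [rhoq_eq, map_smul, map_add, map_one, map_smul, h]

theorem map_single_of_map_rhoq (π : M₂ ≃ₐ[ℂ] M₂) {q : ℝ} (hq : q ^ 2 ≠ 1)
    (h : π (rhoq q) = rhoq q) : π (single 0 0 1) = single 0 0 1 := by
  have hc : 1 + (q : ℂ) ^ 2 ≠ 0 := by exact_mod_cast (by positivity : (1 + q ^ 2 : ℝ) ≠ 0)
  have hd : ((q : ℂ) ^ 2)⁻¹ - 1 ≠ 0 := sub_ne_zero.2 (inv_ne_one.2 (by exact_mod_cast hq))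
  rwa [rhoq_eq, map_smul, map_add, map_one, map_smul, smul_right_inj hc, add_right_inj,
    smul_right_inj hd] at h

theorem map_pauli_of_map_single (π : M₂ ≃ₐ[ℂ] M₂) (a b : ℝ)
    (h00 : π (single 0 0 1) = single 0 0 1)
    (h01 : π (single 0 1 1) = single 0 1 (a - b * I))
    (h10 : π (single 1 0 1) = single 1 0 (a + b * I)) :
    π pauli3 = pauli3 ∧
      π pauli1 = (a : ℂ) • pauli1 + (b : ℂ) • pauli2 ∧
      π pauli2 = -(b : ℂ) • pauli1 + (a : ℂ) • pauli2 := by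
  have hp3 : pauli3 = (2 : ℂ) • single 0 0 1 - 1 := by
    ext i j; fin_cases i <;> fin_cases j <;> norm_num [pauli3]
  have hp1 : pauli1 = single 0 1 1 + single 1 0 1 := by
    ext i j; fin_cases i <;> fin_cases j <;> simp [pauli1]
  have hp2 : pauli2 = (-I) • single 0 1 1 + I • single 1 0 1 := by
    ext i j; fin_cases i <;> fin_cases j <;> simp [pauli2]
  refine ⟨?_, ?_, ?_⟩
  · rw [hp3, map_sub, map_smul, map_one, h00]
  · rw [hp1, map_add, h01, h10]
    ext i j; fin_cases i <;> fin_cases j <;> simp [pauli2, sub_eq_add_neg]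
  · rw [hp2, map_add, map_smul, map_smul, h01, h10]
    ext i j; fin_cases i <;> fin_cases j <;> simp [pauli1] <;>
      linear_combination (b : ℂ) * I_sq

theorem map_pauli_of_trace_rhoq_mul_map_eq {q : ℝ} (hq : q ^ 2 ≠ 1) (π : M₂ ≃ₐ[ℂ] M₂)
    (hstar : ∀ x, π xᴴ = (π x)ᴴ) (hψ : ∀ x, trace (rhoq q * π x) = trace (rhoq q * x)) :
    π pauli3 = pauli3 ∧ ∃ a b : ℝ, a ^ 2 + b ^ 2 = 1 ∧
      π pauli1 = (a : ℂ) • pauli1 + (b : ℂ) • pauli2 ∧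
      π pauli2 = -(b : ℂ) • pauli1 + (a : ℂ) • pauli2 := by
  have h00 := map_single_of_map_rhoq π hq ((trace_mul_algEquiv_eq_iff π _).1 hψ)
  have h11 : π (single 1 1 1) = single 1 1 1 := by
    have h : (single 1 1 1 : M₂) = 1 - single 0 0 1 := by
      ext i j; fin_cases i <;> fin_cases j <;> simp
    rw [h, map_sub, map_one, h00]
  have h01 := π.map_single_eq_single_apply h00 h11
  have h10 := π.map_single_swap_eq hstar h00 h11
  have hw := π.apply_mul_star_apply_eq_one hstar h00 h11
  generalize π (single 0 1 1) 0 1 = w at h01 h10 hw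
  obtain ⟨a, b, rfl⟩ : ∃ a b : ℝ, w = a - b * I := ⟨w.re, -w.im, by apply Complex.ext <;> simp⟩
  have h10' : π (single 1 0 1) = single 1 0 (a + b * I) := by
    rw [h10]; congr 1; apply Complex.ext <;> simp
  obtain ⟨h3, h1, h2⟩ := map_pauli_of_map_single π a b h00 h01 h10'
  refine ⟨h3, a, b, ?_, h1, h2⟩
  have := congrArg re hw
  simp at this
  nlinarith

theorem exists_map_pauli_of_sq_add_sq_eq_one (q a b : ℝ) (hab : a ^ 2 + b ^ 2 = 1) :
    ∃ π : M₂ ≃ₐ[ℂ] M₂, (∀ x, π xᴴ = (π x)ᴴ) ∧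
      (∀ x, trace (rhoq q * π x) = trace (rhoq q * x)) ∧
      π pauli3 = pauli3 ∧
      π pauli1 = (a : ℂ) • pauli1 + (b : ℂ) • pauli2 ∧
      π pauli2 = -(b : ℂ) • pauli1 + (a : ℂ) • pauli2 := by
  set d : Fin 2 → ℂ := ![1, a + b * I]
  have hd : ∀ i, star (d i) * d i = 1 := by
    intro i; fin_cases i
    · simp [d]
    · apply Complex.ext <;> simp [d] <;> nlinarith
  have hU : diagonal d ∈ unitary M₂ := by
    rw [Unitary.mem_iff, star_eq_conjTranspose, diagonal_conjTranspose, diagonal_mul_diagonal,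
      diagonal_mul_diagonal]
    simp only [Pi.star_apply, hd, mul_comm (d _) (star (d _))]
    exact ⟨diagonal_one, diagonal_one⟩
  let σ := Unitary.conjStarAlgAut ℂ M₂ ⟨_, hU⟩
  let π := σ.toAlgEquiv
  have hπ : ∀ i j, π (single i j 1) = single i j (d i * star (d j)) := by
    intro i j
    change diagonal d * single i j 1 * star (diagonal d) = _
    rw [star_eq_conjTranspose, diagonal_conjTranspose, diagonal_mul_single_mul_diagonal, mul_one]
    rfl
  have h00 : π (single 0 0 1) = single 0 0 1 := by simp [hπ, d]
  have h01 : π (single 0 1 1) = single 0 1 (a - b * I) := by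
    rw [hπ]; congr 1; apply Complex.ext <;> simp [d]
  have h10 : π (single 1 0 1) = single 1 0 (a + b * I) := by simp [hπ, d]
  obtain ⟨h3, h1, h2⟩ := map_pauli_of_map_single π a b h00 h01 h10
  exact ⟨π, fun x => map_star σ x, (trace_mul_algEquiv_eq_iff π _).2
    (map_rhoq_of_map_single π q h00), h3, h1, h2⟩

/-- The automorphism group of the quantum set `(M₂, ψ_q)` for `q ∈ (0,1)` is `SO(2)`:
each ψ_q-preserving *-automorphism fixes `σ₃` and rotates `σ₁, σ₂`, and conversely each
such rotation is implemented by a ψ_q-preserving *-automorphism. -/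
theorem stmt14 (q : ℝ) (hq : q ∈ Set.Ioo (0 : ℝ) 1) :
    (∀ π : Matrix (Fin 2) (Fin 2) ℂ ≃ₐ[ℂ] Matrix (Fin 2) (Fin 2) ℂ,
      (∀ x, π xᴴ = (π x)ᴴ) →
      (∀ x, Matrix.trace (rhoq q * π x) = Matrix.trace (rhoq q * x)) →
      π pauli3 = pauli3 ∧
      ∃ a b : ℝ, a ^ 2 + b ^ 2 = 1 ∧
        π pauli1 = (a : ℂ) • pauli1 + (b : ℂ) • pauli2 ∧
        π pauli2 = -(b : ℂ) • pauli1 + (a : ℂ) • pauli2) ∧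
    (∀ a b : ℝ, a ^ 2 + b ^ 2 = 1 →
      ∃ π : Matrix (Fin 2) (Fin 2) ℂ ≃ₐ[ℂ] Matrix (Fin 2) (Fin 2) ℂ,
        (∀ x, π xᴴ = (π x)ᴴ) ∧
        (∀ x, Matrix.trace (rhoq q * π x) = Matrix.trace (rhoq q * x)) ∧
        π pauli3 = pauli3 ∧
        π pauli1 = (a : ℂ) • pauli1 + (b : ℂ) • pauli2 ∧
        π pauli2 = -(b : ℂ) • pauli1 + (a : ℂ) • pauli2) :=
  ⟨map_pauli_of_trace_rhoq_mul_map_eq (pow_lt_one₀ hq.1.le hq.2 two_ne_zero).ne,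
    exists_map_pauli_of_sq_add_sq_eq_one q⟩
end

section
/- Let q ∈ (0,1), α, γ ∈ ℂ, β ∈ [-1,1], let T ∈ M₂(ℂ) have rows (α + q⁻²γ, 1+β), (1−β, α − γ), and set S = ℂ·T. Then: (i) {xᴴ : x ∈ S} = S if and only if β = 0, α ∈ ℝ and γ ∈ ℝ; (ii) it is never the case that both {xᴴ : x ∈ S} = S and ρ_q·S·ρ_q⁻¹ = S; (iii) I₂ ∉ S. -/
open Matrix

/-- For `S = ℂ·T` with `T` having rows `(α+q⁻²γ, 1+β), (1−β, α−γ)`, `β ∈ [-1,1]`,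
`q ∈ (0,1)`: (i) `S* = S` iff `β = 0`, `α ∈ ℝ`, `γ ∈ ℝ`; (ii) never both `S* = S` and
`ρ_q S ρ_q⁻¹ = S`; (iii) `I₂ ∉ S`. -/
theorem stmt15 (q : ℝ) (hq : q ∈ Set.Ioo (0 : ℝ) 1) (α γ : ℂ) (β : ℝ)
    (hβ : β ∈ Set.Icc (-1 : ℝ) 1)
    (T : Matrix (Fin 2) (Fin 2) ℂ)
    (hT : T = !![α + ((q : ℂ) ^ 2)⁻¹ * γ, 1 + (β : ℂ); 1 - (β : ℂ), α - γ])
    (S : Submodule ℂ (Matrix (Fin 2) (Fin 2) ℂ))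
    (hSpan : S = Submodule.span ℂ ({T} : Set (Matrix (Fin 2) (Fin 2) ℂ))) :
    (((fun x => xᴴ) '' (S : Set (Matrix (Fin 2) (Fin 2) ℂ)) = (S : Set (Matrix (Fin 2) (Fin 2) ℂ))) ↔
      (β = 0 ∧ α.im = 0 ∧ γ.im = 0)) ∧
    (¬ (((fun x => xᴴ) '' (S : Set (Matrix (Fin 2) (Fin 2) ℂ)) = (S : Set (Matrix (Fin 2) (Fin 2) ℂ))) ∧
        ((fun x => rhoq q * x * (rhoq q)⁻¹) '' (S : Set (Matrix (Fin 2) (Fin 2) ℂ)) =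
          (S : Set (Matrix (Fin 2) (Fin 2) ℂ))))) ∧
    (1 : Matrix (Fin 2) (Fin 2) ℂ) ∉ S := by
  obtain ⟨hq0, hq1⟩ := hq
  have hqC : (q : ℂ) ≠ 0 := by exact_mod_cast hq0.ne'
  have hTmem : T ∈ S := by rw [hSpan]; exact Submodule.mem_span_singleton_self T
  have hmem : ∀ x, x ∈ S ↔ ∃ c : ℂ, c • T = x := by
    intro x; rw [hSpan, Submodule.mem_span_singleton]
  have hne : ((q : ℂ) ^ 2)⁻¹ + 1 ≠ 0 := by
    have h1 : ((q : ℂ) ^ 2)⁻¹ + 1 = (((q ^ 2)⁻¹ + 1 : ℝ) : ℂ) := by push_cast; ring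
    rw [h1, Complex.ofReal_ne_zero]
    positivity
  -- forward direction of (i)
  have fwd : ((fun x => xᴴ) '' (S : Set (Matrix (Fin 2) (Fin 2) ℂ)) = (S : Set (Matrix (Fin 2) (Fin 2) ℂ)))
      → (β = 0 ∧ α.im = 0 ∧ γ.im = 0) := by
    intro h
    have hTH : Tᴴ ∈ S := by
      have : Tᴴ ∈ (fun x => xᴴ) '' (S : Set (Matrix (Fin 2) (Fin 2) ℂ)) := ⟨T, hTmem, rfl⟩
      rw [h] at this; exact this
    obtain ⟨c, hc⟩ := (hmem _).1 hTH
    have e01 := congrFun (congrFun hc 0) 1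
    have e10 := congrFun (congrFun hc 1) 0
    have e00 := congrFun (congrFun hc 0) 0
    have e11 := congrFun (congrFun hc 1) 1
    simp [hT, Matrix.conjTranspose_apply, Complex.conj_ofReal, map_add, map_sub] at e01 e10 e00 e11
    have hc1 : c = 1 := by linear_combination (e01 + e10) / 2
    subst hc1
    have hβ0 : (β : ℂ) = 0 := by linear_combination (e01 - e10) / 4
    have hg : (starRingEnd ℂ) γ = γ := by
      have key : (((q : ℂ) ^ 2)⁻¹ + 1) * γ = (((q : ℂ) ^ 2)⁻¹ + 1) * (starRingEnd ℂ) γ := by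
        linear_combination e00 - e11
      exact (mul_left_cancel₀ hne key).symm
    have ha : (starRingEnd ℂ) α = α := by linear_combination hg - e11
    exact ⟨by exact_mod_cast hβ0, Complex.conj_eq_iff_im.mp ha, Complex.conj_eq_iff_im.mp hg⟩
  -- backward direction of (i)
  have bwd : (β = 0 ∧ α.im = 0 ∧ γ.im = 0) →
      ((fun x => xᴴ) '' (S : Set (Matrix (Fin 2) (Fin 2) ℂ)) = (S : Set (Matrix (Fin 2) (Fin 2) ℂ))) := by
    rintro ⟨hβ0, ha, hg⟩
    have hca : (starRingEnd ℂ) α = α := Complex.conj_eq_iff_im.mpr ha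
    have hcg : (starRingEnd ℂ) γ = γ := Complex.conj_eq_iff_im.mpr hg
    have hTH : Tᴴ = T := by
      subst hβ0
      ext i j
      fin_cases i <;> fin_cases j <;>
        simp [hT, Matrix.conjTranspose_apply, Complex.conj_ofReal, map_add, map_sub, hca, hcg]
    apply Set.eq_of_subset_of_subset
    · rintro x ⟨y, hy, rfl⟩
      obtain ⟨c, rfl⟩ := (hmem _).1 hy
      refine (hmem _).2 ⟨(starRingEnd ℂ) c, ?_⟩
      simp only [Matrix.conjTranspose_smul, hTH, starRingEnd_apply]
    · intro x hx
      obtain ⟨c, rfl⟩ := (hmem _).1 hx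
      refine ⟨(starRingEnd ℂ) c • T, (hmem _).2 ⟨(starRingEnd ℂ) c, rfl⟩, ?_⟩
      simp only [Matrix.conjTranspose_smul, hTH, starRingEnd_apply, star_star]
  refine ⟨⟨fwd, bwd⟩, ?_, ?_⟩
  · -- (ii)
    rintro ⟨h1, h2⟩
    obtain ⟨hβ0, ha, hg⟩ := fwd h1
    subst hβ0
    -- inverse of rhoq
    have hrinv : (rhoq q)⁻¹ = (1 + (q : ℂ) ^ 2)⁻¹ • !![(q : ℂ) ^ 2, 0; 0, 1] := by
      apply Matrix.inv_eq_right_inv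
      have h1q : (1 : ℂ) + (q : ℂ) ^ 2 ≠ 0 := by
        have : (1 : ℂ) + (q : ℂ) ^ 2 = ((1 + q ^ 2 : ℝ) : ℂ) := by push_cast; ring
        rw [this, Complex.ofReal_ne_zero]; positivity
      ext i j
      fin_cases i <;> fin_cases j <;>
        simp [rhoq, Matrix.mul_apply, Fin.sum_univ_two] <;> field_simp
    have hrT : rhoq q * T * (rhoq q)⁻¹ ∈ S := by
      have : rhoq q * T * (rhoq q)⁻¹ ∈ (fun x => rhoq q * x * (rhoq q)⁻¹) '' (S : Set (Matrix (Fin 2) (Fin 2) ℂ)) :=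
        ⟨T, hTmem, rfl⟩
      rw [h2] at this; exact this
    obtain ⟨c, hc⟩ := (hmem _).1 hrT
    rw [hrinv] at hc
    have e01 := congrFun (congrFun hc 0) 1
    have e10 := congrFun (congrFun hc 1) 0
    simp [hT, rhoq, Matrix.mul_apply, Fin.sum_univ_two] at e01 e10
    have key := e01.symm.trans e10
    have h1q : (1 : ℂ) + (q : ℂ) ^ 2 ≠ 0 := by
      have h' : (1 : ℂ) + (q : ℂ) ^ 2 = ((1 + q ^ 2 : ℝ) : ℂ) := by push_cast; ring
      rw [h', Complex.ofReal_ne_zero]; positivity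
    field_simp at key
    have hq4 : (1 : ℝ) + q ^ 2 = q ^ 2 * (q ^ 2 * (1 + q ^ 2)) := by
      have k : (1 : ℝ) = q ^ 4 := by exact_mod_cast key
      linear_combination (1 + q ^ 2) * k
    have hs1 : q ^ 2 < 1 := by nlinarith
    nlinarith [mul_pos (show (0:ℝ) < 1 + q ^ 2 by positivity)
      (show (0:ℝ) < 1 - q ^ 2 * q ^ 2 by nlinarith [sq_nonneg q])]

  · -- (iii)
    intro h
    obtain ⟨c, hc⟩ := (hmem _).1 h
    have e01 := congrFun (congrFun hc 0) 1
    have e10 := congrFun (congrFun hc 1) 0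
    have e00 := congrFun (congrFun hc 0) 0
    simp [hT, Matrix.one_apply] at e01 e10 e00
    have hc0 : c = 0 := by
      rcases e01 with h1|h1
      · exact h1
      rcases e10 with h2|h2
      · exact h2
      exfalso
      have : (2:ℂ) = 0 := by linear_combination h1 + h2
      norm_num at this
    rw [hc0] at e00
    simp at e00
end

section
/- Let q ∈ (0,1), α, γ, δ ∈ ℂ, β ∈ [-1,1], let T₁ ∈ M₂(ℂ) have rows (q⁻²δ, 1+β), (1−β, −δ), let T₂ ∈ M₂(ℂ) have rows (1 + q⁻²γ, iα(β−1) − γ·con(δ)), (iα(β+1) − γ·con(δ), 1−γ), where con denotes complex conjugation, and let S be the ℂ-linear span of T₁ and T₂. Then: (i) {xᴴ : x ∈ S} = S if and only if β = 0 and α, γ, δ ∈ ℝ; (ii) it is never the case that both {xᴴ : x ∈ S} = S and ρ_q·S·ρ_q⁻¹ = S; (iii) I₂ ∈ S if and only if α = 0 and γ = 0. -/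
open Matrix

/-- The matrix `T₁` with rows `(q⁻²δ, 1+β), (1−β, −δ)`. -/
noncomputable def Tone (q : ℝ) (β : ℝ) (δ : ℂ) : Matrix (Fin 2) (Fin 2) ℂ :=
  !![((q : ℂ) ^ 2)⁻¹ * δ, 1 + (β : ℂ); 1 - (β : ℂ), -δ]

/-- The matrix `T₂` with rows `(1 + q⁻²γ, iα(β−1) − γ·con(δ)), (iα(β+1) − γ·con(δ), 1−γ)`. -/
noncomputable def Ttwo (q : ℝ) (α : ℂ) (β : ℝ) (γ δ : ℂ) : Matrix (Fin 2) (Fin 2) ℂ :=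
  !![1 + ((q : ℂ) ^ 2)⁻¹ * γ, Complex.I * α * ((β : ℂ) - 1) - γ * (starRingEnd ℂ) δ;
     Complex.I * α * ((β : ℂ) + 1) - γ * (starRingEnd ℂ) δ, 1 - γ]

section Aux

lemma auxQ {q : ℝ} (hq0 : 0 < q) : ((q:ℂ)^2) ≠ 0 := by
  simp only [ne_eq, pow_eq_zero_iff, Complex.ofReal_eq_zero]; simp [hq0.ne']

lemma aux1Q {q : ℝ} (_ : 0 < q) : (1:ℂ) + (q:ℂ)^2 ≠ 0 := by
  have h : (0:ℝ) < 1 + q^2 := by positivity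
  have := Complex.ofReal_ne_zero.mpr h.ne'
  push_cast at this; exact this

/-- System for `T₁ᴴ ∈ S`. -/
lemma auxSys1 (q : ℝ) (hq : q ∈ Set.Ioo (0:ℝ) 1) (α γ δ : ℂ) (β : ℝ) (a b : ℂ)
    (h00 : a * (((q:ℂ) ^ 2)⁻¹ * δ) + b * (1 + ((q:ℂ) ^ 2)⁻¹ * γ) = ((q:ℂ) ^ 2)⁻¹ * (starRingEnd ℂ) δ)
    (h01 : a * (1 + (β:ℂ)) + b * (Complex.I * α * ((β:ℂ) - 1) - γ * (starRingEnd ℂ) δ) = 1 - (β:ℂ))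
    (h10 : a * (1 - (β:ℂ)) + b * (Complex.I * α * ((β:ℂ) + 1) - γ * (starRingEnd ℂ) δ) = 1 + (β:ℂ))
    (h11 : -(a * δ) + b * (1 - γ) = -(starRingEnd ℂ) δ) :
    β = 0 ∧ δ.im = 0 := by
  have hq0 : (0:ℝ) < q := hq.1
  have key : ((q:ℂ)^2)⁻¹ * ((q:ℂ)^2) = 1 := inv_mul_cancel₀ (auxQ hq0)
  have hd : b * (1 + (q:ℂ)^2) = 0 * (1 + (q:ℂ)^2) := by
    linear_combination ((q:ℂ)^2) * h00 + h11 - (a*δ + b*γ - (starRingEnd ℂ) δ) * key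
  have hb0 : b = 0 := mul_right_cancel₀ (aux1Q hq0) hd
  subst hb0
  have hβC : (β:ℂ) = 0 := by linear_combination ((1-(β:ℂ))*h01 - (1+(β:ℂ))*h10)/4
  have hβ0 : β = 0 := by exact_mod_cast hβC
  subst hβ0
  push_cast at h00 h01 h10 h11
  have ha1 : a = 1 := by linear_combination h01
  subst ha1
  have hδ : (starRingEnd ℂ) δ = δ := by linear_combination h11
  exact ⟨rfl, (Complex.conj_eq_iff_im.mp hδ)⟩

/-- System for `T₂ᴴ ∈ S` (with `β = 0`, `δ` real already known). -/
lemma auxSys2 (q : ℝ) (hq : q ∈ Set.Ioo (0:ℝ) 1) (α γ δ : ℂ) (c d : ℂ)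
    (hδ : (starRingEnd ℂ) δ = δ)
    (h00 : c * (((q:ℂ) ^ 2)⁻¹ * δ) + d * (1 + ((q:ℂ) ^ 2)⁻¹ * γ) = 1 + ((q:ℂ) ^ 2)⁻¹ * (starRingEnd ℂ) γ)
    (h01 : c * (1 + ((0:ℝ):ℂ)) + d * (Complex.I * α * (((0:ℝ):ℂ) - 1) - γ * (starRingEnd ℂ) δ) =
      -(Complex.I * (starRingEnd ℂ) α * (((0:ℝ):ℂ) + 1)) - (starRingEnd ℂ) γ * δ)
    (h10 : c * (1 - ((0:ℝ):ℂ)) + d * (Complex.I * α * (((0:ℝ):ℂ) + 1) - γ * (starRingEnd ℂ) δ) =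
      -(Complex.I * (starRingEnd ℂ) α * (((0:ℝ):ℂ) - 1)) - (starRingEnd ℂ) γ * δ)
    (h11 : -(c * δ) + d * (1 - γ) = 1 - (starRingEnd ℂ) γ) :
    α.im = 0 ∧ γ.im = 0 := by
  have hq0 : (0:ℝ) < q := hq.1
  have key : ((q:ℂ)^2)⁻¹ * ((q:ℂ)^2) = 1 := inv_mul_cancel₀ (auxQ hq0)
  rw [hδ] at h01 h10
  push_cast at h01 h10
  have hdd : d * (1 + (q:ℂ)^2) = 1 * (1 + (q:ℂ)^2) := by
    linear_combination ((q:ℂ)^2) * h00 + h11 - (c*δ + d*γ - (starRingEnd ℂ) γ) * key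
  have hd1 : d = 1 := mul_right_cancel₀ (aux1Q hq0) hdd
  subst hd1
  have hIα : Complex.I * (starRingEnd ℂ) α = Complex.I * α := by
    linear_combination (h01 - h10)/2
  have hα : (starRingEnd ℂ) α = α := mul_left_cancel₀ Complex.I_ne_zero hIα
  have hns2 : ((Complex.normSq δ : ℝ) : ℂ) = δ * δ := by
    have := Complex.mul_conj δ
    rw [hδ] at this; exact this.symm
  have hA : c = (γ - (starRingEnd ℂ) γ) * δ := by linear_combination (h01 + h10)/2
  have hB : c * δ = (starRingEnd ℂ) γ - γ := by linear_combination -h11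
  have hC : (γ - (starRingEnd ℂ) γ) * (1 + ((Complex.normSq δ : ℝ):ℂ)) = 0 := by
    linear_combination hB - δ * hA + (γ - (starRingEnd ℂ) γ) * hns2
  have hp : ((1:ℂ) + ((Complex.normSq δ:ℝ):ℂ)) ≠ 0 := by
    have h : (0:ℝ) < 1 + Complex.normSq δ := by nlinarith [Complex.normSq_nonneg δ]
    have := Complex.ofReal_ne_zero.mpr h.ne'
    push_cast at this; exact this
  have hγ : (starRingEnd ℂ) γ = γ := by
    rcases mul_eq_zero.1 hC with h | h
    · linear_combination -h
    · exact absurd h hp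
  exact ⟨Complex.conj_eq_iff_im.mp hα, Complex.conj_eq_iff_im.mp hγ⟩

/-- System for `1 ∈ S`. -/
lemma auxSys3 (q : ℝ) (hq : q ∈ Set.Ioo (0:ℝ) 1) (α γ δ : ℂ) (β : ℝ) (a b : ℂ)
    (h00 : a * (((q:ℂ) ^ 2)⁻¹ * δ) + b * (1 + ((q:ℂ) ^ 2)⁻¹ * γ) = 1)
    (h01 : a * (1 + (β:ℂ)) + b * (Complex.I * α * ((β:ℂ) - 1) - γ * (starRingEnd ℂ) δ) = 0)
    (h10 : a * (1 - (β:ℂ)) + b * (Complex.I * α * ((β:ℂ) + 1) - γ * (starRingEnd ℂ) δ) = 0)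
    (h11 : -(a * δ) + b * (1 - γ) = 1) : α = 0 ∧ γ = 0 := by
  have hq0 : (0:ℝ) < q := hq.1
  have key : ((q:ℂ)^2)⁻¹ * ((q:ℂ)^2) = 1 := inv_mul_cancel₀ (auxQ hq0)
  have hb : b * (1 + (q:ℂ)^2) = 1 * (1 + (q:ℂ)^2) := by
    linear_combination ((q:ℂ)^2) * h00 + h11 - (a*δ + b*γ) * key
  have hb1 : b = 1 := mul_right_cancel₀ (aux1Q hq0) hb
  subst hb1
  have E2 : a * δ = -γ := by linear_combination -h11
  have E1 : a * (β:ℂ) = Complex.I * α := by linear_combination (h01 - h10)/2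
  have E3 : a = γ * (starRingEnd ℂ) δ - Complex.I * α * β := by
    linear_combination (h01 + h10)/2
  have eq1 : γ * (starRingEnd ℂ) δ * β = Complex.I * α * (1 + (β:ℂ)^2) := by
    linear_combination E1 - (β:ℂ) * E3
  have eq2 : γ * (1 + δ * (starRingEnd ℂ) δ) = Complex.I * α * β * δ := by
    linear_combination E2 - δ * E3
  have step3 : γ * (β:ℂ) = -(Complex.I * α * δ) := by
    linear_combination (β:ℂ) * eq2 - δ * eq1
  have hns : ((Complex.normSq δ : ℝ) : ℂ) = δ * (starRingEnd ℂ) δ := (Complex.mul_conj δ).symm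
  have step4 : Complex.I * α * ((1:ℂ) + (β:ℂ)^2 + (Complex.normSq δ : ℝ)) = 0 := by
    linear_combination (starRingEnd ℂ) δ * step3 - eq1 + Complex.I * α * hns
  have hpos : ((1:ℂ) + (β:ℂ)^2 + (Complex.normSq δ : ℝ)) ≠ 0 := by
    have h : (0:ℝ) < 1 + β^2 + Complex.normSq δ := by nlinarith [Complex.normSq_nonneg δ, sq_nonneg β]
    have := Complex.ofReal_ne_zero.mpr h.ne'
    push_cast at this; exact this
  have hα : α = 0 := by
    rcases mul_eq_zero.1 step4 with h | h
    · rcases mul_eq_zero.1 h with h | h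
      · exact absurd h Complex.I_ne_zero
      · exact h
    · exact absurd h hpos
  refine ⟨hα, ?_⟩
  subst hα
  have hg : γ * ((1:ℂ) + (Complex.normSq δ : ℝ)) = 0 := by
    linear_combination eq2 + γ * hns
  have hp : ((1:ℂ) + (Complex.normSq δ : ℝ)) ≠ 0 := by
    have h : (0:ℝ) < 1 + Complex.normSq δ := by nlinarith [Complex.normSq_nonneg δ]
    have := Complex.ofReal_ne_zero.mpr h.ne'
    push_cast at this; exact this
  rcases mul_eq_zero.1 hg with h | h
  · exact h
  · exact absurd h hp

/-- System for `ρ T₁ ρ⁻¹ ∈ S` (with `β = 0`): contradiction. -/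
lemma auxSys4 (q : ℝ) (hq : q ∈ Set.Ioo (0:ℝ) 1) (α γ δ : ℂ) (c d : ℂ)
    (k00 : c * (((q:ℂ) ^ 2)⁻¹ * δ) + d * (1 + ((q:ℂ) ^ 2)⁻¹ * γ) = ((q:ℂ) ^ 2)⁻¹ * δ)
    (k01 : c * (1 + ((0:ℝ):ℂ)) + d * (Complex.I * α * (((0:ℝ):ℂ) - 1) - γ * (starRingEnd ℂ) δ) =
      ((q:ℂ) ^ 2)⁻¹ * (1 + ((0:ℝ):ℂ)))
    (k10 : c * (1 - ((0:ℝ):ℂ)) + d * (Complex.I * α * (((0:ℝ):ℂ) + 1) - γ * (starRingEnd ℂ) δ) =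
      (q:ℂ) ^ 2 * (1 - ((0:ℝ):ℂ)))
    (k11 : -(c * δ) + d * (1 - γ) = -δ) : False := by
  obtain ⟨hq0, hq1⟩ := hq
  have key : ((q:ℂ)^2)⁻¹ * ((q:ℂ)^2) = 1 := inv_mul_cancel₀ (auxQ hq0)
  have hd : d * (1 + (q:ℂ)^2) = 0 * (1 + (q:ℂ)^2) := by
    linear_combination ((q:ℂ)^2) * k00 + k11 - (c*δ + d*γ - δ) * key
  have hd0 : d = 0 := mul_right_cancel₀ (aux1Q hq0) hd
  subst hd0
  push_cast at k01 k10
  have hQQ : (q:ℂ)^2 * (q:ℂ)^2 = 1 := by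
    linear_combination (q:ℂ)^2 * (k01 - k10) + key
  have h4 : ((q^4 : ℝ):ℂ) = ((1:ℝ):ℂ) := by push_cast; linear_combination hQQ
  have h4' : q^4 = 1 := Complex.ofReal_inj.mp h4
  have hlt : q^4 < 1 := pow_lt_one₀ (le_of_lt hq0) hq1 (by norm_num)
  linarith

lemma auxRho (q : ℝ) (hq0 : (0:ℝ) < q) (β : ℝ) (δ : ℂ) :
    rhoq q * Tone q β δ * (rhoq q)⁻¹ =
      !![((q : ℂ)^2)⁻¹ * δ, ((q:ℂ)^2)⁻¹ * (1 + (β:ℂ)); (q:ℂ)^2 * (1 - (β:ℂ)), -δ] := by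
  have hQ : ((q:ℂ)^2) ≠ 0 := auxQ hq0
  have h1Q : (1:ℂ) + (q:ℂ)^2 ≠ 0 := aux1Q hq0
  have hinv : (rhoq q)⁻¹ = (1 + (q : ℂ) ^ 2)⁻¹ • !![(q : ℂ) ^ 2, 0; 0, 1] := by
    apply inv_eq_right_inv
    rw [rhoq, Matrix.smul_mul, Matrix.mul_smul, smul_smul, mul_inv_cancel₀ h1Q]
    ext i j
    fin_cases i <;> fin_cases j <;>
      simp [Matrix.mul_apply, Fin.sum_univ_two, hQ]
  rw [hinv, rhoq]
  ext i j
  fin_cases i <;> fin_cases j <;>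
  · simp [Tone, Matrix.mul_apply, Fin.sum_univ_two]
    field_simp

lemma auxHerm1 (q : ℝ) (δ : ℂ) (hδ' : (starRingEnd ℂ) δ = δ) :
    (Tone q 0 δ)ᴴ = Tone q 0 δ := by
  ext i j
  fin_cases i <;> fin_cases j <;>
    simp [Tone, Matrix.conjTranspose_apply, _root_.map_mul, Complex.conj_ofReal, hδ']

lemma auxHerm2 (q : ℝ) (α γ δ : ℂ) (hα' : (starRingEnd ℂ) α = α)
    (hγ' : (starRingEnd ℂ) γ = γ) (hδ' : (starRingEnd ℂ) δ = δ) :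
    (Ttwo q α 0 γ δ)ᴴ = Ttwo q α 0 γ δ := by
  ext i j
  fin_cases i <;> fin_cases j <;>
    simp [Ttwo, Matrix.conjTranspose_apply, _root_.map_mul, Complex.conj_ofReal,
      hα', hγ', hδ'] <;> ring

lemma auxTtwoOne (q : ℝ) (β : ℝ) (δ : ℂ) : Ttwo q 0 β 0 δ = 1 := by
  ext i j
  fin_cases i <;> fin_cases j <;> simp [Ttwo, Matrix.one_apply]

end Aux

/-- For `S = span{T₁, T₂}`, `q ∈ (0,1)`, `β ∈ [-1,1]`:
(i) `S* = S` iff `β = 0` and `α, γ, δ ∈ ℝ`;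
(ii) never both `S* = S` and `ρ_q S ρ_q⁻¹ = S`;
(iii) `I₂ ∈ S` iff `α = 0` and `γ = 0`. -/
theorem stmt18 (q : ℝ) (hq : q ∈ Set.Ioo (0 : ℝ) 1) (α γ δ : ℂ) (β : ℝ)
    (hβ : β ∈ Set.Icc (-1 : ℝ) 1)
    (S : Submodule ℂ (Matrix (Fin 2) (Fin 2) ℂ))
    (hSpan : S = Submodule.span ℂ
      ({Tone q β δ, Ttwo q α β γ δ} : Set (Matrix (Fin 2) (Fin 2) ℂ))) :
    (((fun x => xᴴ) '' (S : Set (Matrix (Fin 2) (Fin 2) ℂ)) =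
        (S : Set (Matrix (Fin 2) (Fin 2) ℂ))) ↔
      (β = 0 ∧ α.im = 0 ∧ γ.im = 0 ∧ δ.im = 0)) ∧
    (¬ (((fun x => xᴴ) '' (S : Set (Matrix (Fin 2) (Fin 2) ℂ)) =
          (S : Set (Matrix (Fin 2) (Fin 2) ℂ))) ∧
        ((fun x => rhoq q * x * (rhoq q)⁻¹) '' (S : Set (Matrix (Fin 2) (Fin 2) ℂ)) =
          (S : Set (Matrix (Fin 2) (Fin 2) ℂ))))) ∧
    ((1 : Matrix (Fin 2) (Fin 2) ℂ) ∈ S ↔ (α = 0 ∧ γ = 0)) := by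
  have hq0 : (0:ℝ) < q := hq.1
  have hT1mem : Tone q β δ ∈ S := by
    rw [hSpan]; exact Submodule.subset_span (Set.mem_insert _ _)
  have hT2mem : Ttwo q α β γ δ ∈ S := by
    rw [hSpan]; exact Submodule.subset_span (Set.mem_insert_iff.mpr (Or.inr rfl))
  -- forward direction of (i)
  have fwd : ((fun x => xᴴ) '' (S : Set (Matrix (Fin 2) (Fin 2) ℂ)) =
      (S : Set (Matrix (Fin 2) (Fin 2) ℂ))) → (β = 0 ∧ α.im = 0 ∧ γ.im = 0 ∧ δ.im = 0) := by
    intro hset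
    have hT1H : (Tone q β δ)ᴴ ∈ S := by
      rw [← SetLike.mem_coe, ← hset]; exact ⟨Tone q β δ, hT1mem, rfl⟩
    rw [hSpan, Submodule.mem_span_pair] at hT1H
    obtain ⟨a, b, h⟩ := hT1H
    have h00 := congrFun (congrFun h 0) 0
    have h01 := congrFun (congrFun h 0) 1
    have h10 := congrFun (congrFun h 1) 0
    have h11 := congrFun (congrFun h 1) 1
    simp [Tone, Ttwo, Matrix.conjTranspose_apply, _root_.map_mul, Complex.conj_ofReal]
      at h00 h01 h10 h11
    obtain ⟨hβ0, hδim⟩ := auxSys1 q hq α γ δ β a b h00 h01 h10 h11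
    have hδ' : (starRingEnd ℂ) δ = δ := Complex.conj_eq_iff_im.mpr hδim
    have hT2H : (Ttwo q α β γ δ)ᴴ ∈ S := by
      rw [← SetLike.mem_coe, ← hset]; exact ⟨Ttwo q α β γ δ, hT2mem, rfl⟩
    rw [hSpan, Submodule.mem_span_pair] at hT2H
    obtain ⟨c, d, h2⟩ := hT2H
    have g00 := congrFun (congrFun h2 0) 0
    have g01 := congrFun (congrFun h2 0) 1
    have g10 := congrFun (congrFun h2 1) 0
    have g11 := congrFun (congrFun h2 1) 1
    simp [Tone, Ttwo, Matrix.conjTranspose_apply, _root_.map_mul, Complex.conj_ofReal]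
      at g00 g01 g10 g11
    rw [hβ0] at g01 g10
    obtain ⟨hαim, hγim⟩ := auxSys2 q hq α γ δ c d hδ' g00 g01 g10 g11
    exact ⟨hβ0, hαim, hγim, hδim⟩
  refine ⟨⟨fwd, ?_⟩, ?_, ?_, ?_⟩
  · -- backward direction of (i)
    rintro ⟨hβ0, hαim, hγim, hδim⟩
    subst hβ0
    have hα' : (starRingEnd ℂ) α = α := Complex.conj_eq_iff_im.mpr hαim
    have hγ' : (starRingEnd ℂ) γ = γ := Complex.conj_eq_iff_im.mpr hγim
    have hδ' : (starRingEnd ℂ) δ = δ := Complex.conj_eq_iff_im.mpr hδim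
    have hT1 : (Tone q 0 δ)ᴴ = Tone q 0 δ := auxHerm1 q δ hδ'
    have hT2 : (Ttwo q α 0 γ δ)ᴴ = Ttwo q α 0 γ δ := auxHerm2 q α γ δ hα' hγ' hδ'
    have hmem : ∀ x ∈ S, xᴴ ∈ S := by
      intro x hx
      rw [hSpan, Submodule.mem_span_pair] at hx ⊢
      obtain ⟨a, b, rfl⟩ := hx
      exact ⟨starRingEnd ℂ a, starRingEnd ℂ b, by
        rw [conjTranspose_add, conjTranspose_smul, conjTranspose_smul, hT1, hT2]; rfl⟩
    apply Set.Subset.antisymm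
    · rintro _ ⟨x, hx, rfl⟩; exact hmem x hx
    · intro x hx
      exact ⟨xᴴ, hmem x hx, conjTranspose_conjTranspose x⟩
  · -- part (ii)
    rintro ⟨hset, hrho⟩
    obtain ⟨hβ0, hαim, hγim, hδim⟩ := fwd hset
    have hrhoT1 : rhoq q * Tone q β δ * (rhoq q)⁻¹ ∈ S := by
      rw [← SetLike.mem_coe, ← hrho]; exact ⟨Tone q β δ, hT1mem, rfl⟩
    rw [auxRho q hq0 β δ] at hrhoT1
    rw [hSpan, Submodule.mem_span_pair] at hrhoT1
    obtain ⟨c, d, h⟩ := hrhoT1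
    have k00 := congrFun (congrFun h 0) 0
    have k01 := congrFun (congrFun h 0) 1
    have k10 := congrFun (congrFun h 1) 0
    have k11 := congrFun (congrFun h 1) 1
    simp [Tone, Ttwo] at k00 k01 k10 k11
    rw [hβ0] at k01 k10
    exact auxSys4 q hq α γ δ c d k00 k01 k10 k11
  · -- (iii) forward
    intro hone
    rw [hSpan, Submodule.mem_span_pair] at hone
    obtain ⟨a, b, h⟩ := hone
    have h00 := congrFun (congrFun h 0) 0
    have h01 := congrFun (congrFun h 0) 1
    have h10 := congrFun (congrFun h 1) 0
    have h11 := congrFun (congrFun h 1) 1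
    simp [Tone, Ttwo, Matrix.one_apply] at h00 h01 h10 h11
    exact auxSys3 q hq α γ δ β a b h00 h01 h10 h11
  · -- (iii) backward
    rintro ⟨hα0, hγ0⟩
    subst hα0; subst hγ0
    rw [← auxTtwoOne q β δ]
    exact hT2mem
end

section
/- Let ρ ∈ M₂(ℂ) be a positive-definite Hermitian matrix with Tr(ρ⁻¹) = 1. Then there exist a unique q ∈ (0,1] and a unitary matrix U ∈ M₂(ℂ) such that U·ρ·Uᴴ = ρ_q, where ρ_q = (1+q²)·diag(q⁻², 1). -/
open Matrix ComplexOrder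

-- helper: rhoq q = diag(a,b)
lemma rhoq_diag (a b : ℝ) (ha : 0 < a) (hb1 : 1 < b) (hb2 : b ≤ 2)
    (hab : a⁻¹ + b⁻¹ = 1) :
    ∃ q ∈ Set.Ioc (0:ℝ) 1, rhoq q = !![(a:ℂ), 0; 0, (b:ℂ)] := by
  refine ⟨Real.sqrt (b - 1), ⟨Real.sqrt_pos.mpr (by linarith), Real.sqrt_le_one.mpr (by linarith)⟩, ?_⟩
  have hq2 : (Real.sqrt (b-1) : ℂ)^2 = (b:ℂ) - 1 := by
    rw [← Complex.ofReal_pow, Real.sq_sqrt (by linarith : (0:ℝ) ≤ b - 1)]; push_cast; ring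
  have hb1' : (b:ℂ) - 1 ≠ 0 := by
    intro h
    have : (b:ℝ) - 1 = 0 := by exact_mod_cast h
    linarith
  have ha' : (a : ℂ) = b / (b - 1) := by
    have hbne : (b:ℝ) ≠ 0 := by linarith
    have hane : (a:ℝ) ≠ 0 := ne_of_gt ha
    have h1 : a * (b - 1) = b := by field_simp at hab; linear_combination -hab
    have : a = b / (b-1) := by rw [eq_div_iff (by linarith : b - 1 ≠ 0)]; exact h1
    rw [this]; push_cast; ring
  unfold rhoq
  rw [hq2]
  ext i j
  fin_cases i <;> fin_cases j <;>
    simp [ha'] <;> field_simp <;> ring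

lemma uniq_aux {q q' : ℝ} (hq : q ∈ Set.Ioc (0:ℝ) 1) (hq' : q' ∈ Set.Ioc (0:ℝ) 1)
    (h : (1+q^2) * ((q^2)⁻¹+1) = (1+q'^2)*((q'^2)⁻¹+1)) : q' = q := by
  obtain ⟨hq0, hq1⟩ := hq
  obtain ⟨hq'0, hq'1⟩ := hq'
  have hqne : q ≠ 0 := ne_of_gt hq0
  have hq'ne : q' ≠ 0 := ne_of_gt hq'0
  have key : (q'^2 - q^2) * (1 - q^2*q'^2) = 0 := by
    field_simp at h; linear_combination h
  rcases mul_eq_zero.mp key with h2 | h2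
  · have h3 : (q' - q) * (q' + q) = 0 := by linear_combination h2
    rcases mul_eq_zero.mp h3 with h4 | h4
    · linarith
    · linarith
  · have hqq : q^2 * q'^2 = 1 := by linarith
    have hqs : q^2 ≤ 1 := by nlinarith
    have hq's : q'^2 ≤ 1 := by nlinarith
    have g1 : 1 ≤ q^2 := by nlinarith
    have g2 : 1 ≤ q'^2 := by nlinarith
    have e1 : q = 1 := by nlinarith
    have e2 : q' = 1 := by nlinarith
    rw [e1, e2]


/-- Every positive-definite Hermitian `ρ ∈ M₂(ℂ)` with `Tr(ρ⁻¹) = 1` is unitarily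
equivalent to `ρ_q` for a unique `q ∈ (0,1]`. -/
theorem stmt19 (ρ : Matrix (Fin 2) (Fin 2) ℂ) (hρ : ρ.PosDef)
    (htr : Matrix.trace ρ⁻¹ = 1) :
    ∃! q : ℝ, q ∈ Set.Ioc (0 : ℝ) 1 ∧
      ∃ U : Matrix (Fin 2) (Fin 2) ℂ, U * Uᴴ = 1 ∧ U * ρ * Uᴴ = rhoq q := by
  have hH : ρ.IsHermitian := hρ.1
  set e : Fin 2 → ℝ := hH.eigenvalues with he_def
  have he : ∀ i, 0 < e i := fun i => hρ.eigenvalues_pos i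
  set D : Matrix (Fin 2) (Fin 2) ℂ := Matrix.diagonal (fun i => ((e i : ℝ) : ℂ)) with hD_def
  obtain ⟨V, hVsV, hVVs, hspec, hspec'⟩ :
      ∃ V : Matrix (Fin 2) (Fin 2) ℂ, star V * V = 1 ∧ V * star V = 1 ∧
        star V * ρ * V = D ∧ ρ = V * D * star V := by
    refine ⟨(Matrix.IsHermitian.eigenvectorUnitary hH : Matrix (Fin 2) (Fin 2) ℂ),
      Unitary.coe_star_mul_self _, Unitary.coe_mul_star_self _, ?_, ?_⟩
    · simpa [hD_def, Function.comp_def] using hH.conjStarAlgAut_star_eigenvectorUnitary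
    · simpa [hD_def, Function.comp_def] using hH.spectral_theorem
  -- trace of the inverse
  have hinv : ρ⁻¹ = V * (D⁻¹ * star V) := by
    rw [hspec', Matrix.mul_inv_rev, Matrix.mul_inv_rev,
      Matrix.inv_eq_left_inv hVVs, Matrix.inv_eq_left_inv hVsV]
  have hDinv : D⁻¹ = Matrix.diagonal (fun i => ((e i : ℝ) : ℂ)⁻¹) := by
    apply Matrix.inv_eq_left_inv
    rw [hD_def, Matrix.diagonal_mul_diagonal]
    have : ∀ i : Fin 2, ((e i : ℝ) : ℂ)⁻¹ * ((e i : ℝ) : ℂ) = 1 := fun i =>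
      inv_mul_cancel₀ (Complex.ofReal_ne_zero.mpr (ne_of_gt (he i)))
    simp only [this]
    exact Matrix.diagonal_one
  have htr2 : ((e 0 : ℝ) : ℂ)⁻¹ + ((e 1 : ℝ) : ℂ)⁻¹ = 1 := by
    have h1 : Matrix.trace ρ⁻¹ = Matrix.trace D⁻¹ := by
      rw [hinv, Matrix.trace_mul_comm, mul_assoc, hVsV, mul_one]
    rw [h1, hDinv, Matrix.trace_diagonal, Fin.sum_univ_two] at htr
    exact htr
  have hsum : (e 0)⁻¹ + (e 1)⁻¹ = 1 := by exact_mod_cast htr2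
  have hdiagm : D = !![((e 0 : ℝ):ℂ), 0; 0, ((e 1 : ℝ):ℂ)] := by
    rw [hD_def]
    ext i j
    fin_cases i <;> fin_cases j <;> simp [Matrix.diagonal]
  -- auxiliary bounds for b ≤ a with a⁻¹ + b⁻¹ = 1
  have haux : ∀ a b : ℝ, 0 < a → 0 < b → b ≤ a → a⁻¹ + b⁻¹ = 1 → 1 < b ∧ b ≤ 2 := by
    intro a b ha hb hba hs
    have h1 : 0 < a⁻¹ := inv_pos.mpr ha
    have h2 : b⁻¹ < 1 := by linarith
    have h3 : b * b⁻¹ = 1 := mul_inv_cancel₀ (ne_of_gt hb)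
    have h4 : a⁻¹ ≤ b⁻¹ := by
      have := inv_anti₀ hb hba
      exact this
    constructor
    · nlinarith [mul_pos hb (by linarith : (0:ℝ) < 1 - b⁻¹)]
    · nlinarith [mul_pos hb (by linarith : (0:ℝ) < b⁻¹), h3]
  -- existence
  obtain ⟨q, hqIoc, U, hU1, hU2⟩ :
      ∃ q ∈ Set.Ioc (0:ℝ) 1, ∃ U : Matrix (Fin 2) (Fin 2) ℂ,
        U * Uᴴ = 1 ∧ U * ρ * Uᴴ = rhoq q := by
    rcases le_total (e 1) (e 0) with hle | hle
    · obtain ⟨hb1, hb2⟩ := haux (e 0) (e 1) (he 0) (he 1) hle hsum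
      obtain ⟨q, hqIoc, hrq⟩ := rhoq_diag (e 0) (e 1) (he 0) hb1 hb2 hsum
      refine ⟨q, hqIoc, star V, ?_, ?_⟩
      · rw [← Matrix.star_eq_conjTranspose, star_star]; exact hVsV
      · rw [← Matrix.star_eq_conjTranspose, star_star, hspec, hrq, hdiagm]
    · obtain ⟨hb1, hb2⟩ := haux (e 1) (e 0) (he 1) (he 0) hle (by linarith [hsum])
      obtain ⟨q, hqIoc, hrq⟩ := rhoq_diag (e 1) (e 0) (he 1) hb1 hb2 (by linarith [hsum])
      set P : Matrix (Fin 2) (Fin 2) ℂ := !![0, 1; 1, 0] with hP_def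
      have hPP : P * P = 1 := by
        rw [hP_def, Matrix.mul_fin_two, Matrix.one_fin_two]; norm_num
      have hPH : Pᴴ = P := by
        rw [hP_def]; ext i j; fin_cases i <;> fin_cases j <;> simp
      refine ⟨q, hqIoc, P * star V, ?_, ?_⟩
      · rw [Matrix.conjTranspose_mul, hPH, ← Matrix.star_eq_conjTranspose, star_star,
          mul_assoc, ← mul_assoc (star V) V P, hVsV, one_mul, hPP]
      · rw [Matrix.conjTranspose_mul, hPH, ← Matrix.star_eq_conjTranspose, star_star]
        have hmid : P * star V * ρ * (V * P) = P * (star V * ρ * V) * P := by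
          simp only [mul_assoc]
        rw [hmid, hspec, hdiagm, hrq, hP_def]
        ext i j
        fin_cases i <;> fin_cases j <;>
          simp [Matrix.mul_apply, Fin.sum_univ_two]
  -- trace of rhoq
  have htrr : ∀ s : ℝ, Matrix.trace (rhoq s) = (1+(s:ℂ)^2) * (((s:ℂ)^2)⁻¹+1) := by
    intro s
    simp only [rhoq, Matrix.trace_smul, Matrix.trace_fin_two_of, smul_eq_mul]
  have hconj : ∀ (s : ℝ) (W : Matrix (Fin 2) (Fin 2) ℂ), W * Wᴴ = 1 →
      W * ρ * Wᴴ = rhoq s → Matrix.trace (rhoq s) = Matrix.trace ρ := by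
    intro s W h1 h2
    have h1' : Wᴴ * W = 1 := mul_eq_one_comm.mp h1
    calc Matrix.trace (rhoq s) = Matrix.trace (W * ρ * Wᴴ) := by rw [h2]
      _ = Matrix.trace (Wᴴ * (W * ρ)) := Matrix.trace_mul_comm _ _
      _ = Matrix.trace ρ := by rw [← mul_assoc, h1', one_mul]
  refine ⟨q, ⟨hqIoc, U, hU1, hU2⟩, ?_⟩
  rintro q' ⟨hq'Ioc, U', hU'1, hU'2⟩
  have heqC : (1+(q':ℂ)^2) * (((q':ℂ)^2)⁻¹+1) = (1+(q:ℂ)^2) * (((q:ℂ)^2)⁻¹+1) := by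
    rw [← htrr, ← htrr, hconj q' U' hU'1 hU'2, hconj q U hU1 hU2]
  have heqR : (1+q'^2) * ((q'^2)⁻¹+1) = (1+q^2) * ((q^2)⁻¹+1) := by exact_mod_cast heqC
  exact uniq_aux hqIoc hq'Ioc heqR.symm
end
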